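/- arXiv:2507.19456 — 3 statements merged into one kernel-verified Lean document; each statement's English description precedes it below -/
import Mathlib

section
/- In the auxiliary hypergraph H1 built from K^{(k)}_{n,…,n} (with k ≥ 2), there is a constant c depending only on k such that every vertex v of H1 satisfies |deg_{H1}(v) − n^{k²+1}/2| ≤ c·n^{k²}; in particular, H1 is essentially d-regular for d = n^{k²+1}/2. -/
open Finset

/-- The vertex set of `K^{(k)}_{n,…,n}`: pairs `(p, v)` where `p` indexes the part and
`v` the vertex within part `X_p`. -/
abbrev HVtx (n k : ℕ) := Fin k × Fin n

/-- The color set `N₁`, of size `⌈n/2⌉`. -/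
abbrev ColK (n : ℕ) := Fin ((n + 1) / 2)

/-- The vertex set of the auxiliary hypergraph `H₁`: the set `A` of `k`-element vertex
sets of the form `a ∪ {u}` with `a ∈ A_{k−1}` (encoded simply as finsets of vertices),
together with the set `B` of pairs `{i} ∪ a` of a color `i ∈ N₁` and a set `a ∈ A_{k−1}`. -/
abbrev VHK (n k : ℕ) := Finset (HVtx n k) ⊕ (ColK n × Finset (HVtx n k))

/-- `a` has at most one vertex in each part. -/
def PartialTrans (n k : ℕ) (a : Finset (HVtx n k)) : Prop :=
  ∀ x ∈ a, ∀ y ∈ a, x.1 = y.1 → x = y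

/-- `a ∈ A_{k−1}`: a `(k−1)`-element vertex set with at most one vertex from each part. -/
def IsA' (n k : ℕ) (a : Finset (HVtx n k)) : Prop :=
  a.card = k - 1 ∧ PartialTrans n k a

/-- `a ∈ A`: a set of the form `a' ∪ {u}` with `a' ∈ A_{k−1}` and `u ∉ a'`. -/
def IsA (n k : ℕ) (a : Finset (HVtx n k)) : Prop :=
  a.card = k ∧ ∃ b ⊆ a, IsA' n k b

/-- A copy `S` of `K^{(k)}_{k+1,…,k+1}` in `K^{(k)}_{n,…,n}`, with its vertices indexed,
is described by a family `f` of injections `f p : Fin (k+1) → Fin n`, one per part; the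
vertex of `S` in part `p` with index `ℓ` is `(p, f p ℓ)`.  A vertex set `a` is a
*transversal of `S`* if all its vertices are vertices of `S` and their indices within
their parts are pairwise distinct. -/
def IsTransOf (n k : ℕ) (f : Fin k → Fin (k + 1) → Fin n)
    (a : Finset (HVtx n k)) : Prop :=
  ∃ g : HVtx n k → Fin (k + 1),
    (∀ x ∈ a, x.2 = f x.1 (g x)) ∧ Set.InjOn g (a : Set (HVtx n k))

/-- The vertex set (as a subset of `V(H₁)`) of the tile `e_{S,i}`: it consists of all
`a ∈ A` with `a ⊆ V(S)` that are transversals of `S`, together with all `{i} ∪ a ∈ B`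
with `a ⊆ V(S)` a transversal of `S`. -/
def tileVertsK (n k : ℕ) (i : ColK n) (f : Fin k → Fin (k + 1) → Fin n) :
    Set (VHK n k) :=
  {v | (∃ a : Finset (HVtx n k), IsA n k a ∧ IsTransOf n k f a ∧ v = Sum.inl a) ∨
       (∃ a : Finset (HVtx n k), IsA' n k a ∧ IsTransOf n k f a ∧ v = Sum.inr (i, a))}

/-- `T` is a tile of `H₁` with color `i`. -/
def IsTileColK (n k : ℕ) (i : ColK n) (T : Finset (VHK n k)) : Prop :=
  ∃ f : Fin k → Fin (k + 1) → Fin n,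
    (∀ p, Function.Injective (f p)) ∧ (T : Set (VHK n k)) = tileVertsK n k i f

/-- `T` is a tile of `H₁`. -/
def IsTileK (n k : ℕ) (T : Finset (VHK n k)) : Prop :=
  ∃ i : ColK n, IsTileColK n k i T

/-- `v` is a genuine vertex of `H₁`, i.e. an element of `A ∪ B`. -/
def IsVertexK (n k : ℕ) : VHK n k → Prop
  | Sum.inl a => IsA n k a
  | Sum.inr (_, a) => IsA' n k a

/-- The degree of `v` in `H₁`: the number of tiles of `H₁` containing `v`. -/
noncomputable def degK (n k : ℕ) (v : VHK n k) : ℕ :=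
  {T : Finset (VHK n k) | IsTileK n k T ∧ v ∈ T}.ncard

-- ### auxiliary lemmas

lemma isTransOf_subset {n k : ℕ} {f : Fin k → Fin (k+1) → Fin n} {a b : Finset (HVtx n k)}
    (h : IsTransOf n k f a) (hb : b ⊆ a) : IsTransOf n k f b := by
  obtain ⟨g, hg1, hg2⟩ := h
  exact ⟨g, fun x hx => hg1 x (hb hx), hg2.mono (by exact_mod_cast hb)⟩

lemma isTransOf_comp {n k : ℕ} {f : Fin k → Fin (k+1) → Fin n} (σ : Equiv.Perm (Fin (k+1)))
    {a : Finset (HVtx n k)} :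
    IsTransOf n k (fun p => f p ∘ σ) a ↔ IsTransOf n k f a := by
  constructor
  · rintro ⟨g, hg1, hg2⟩
    exact ⟨σ ∘ g, fun x hx => hg1 x hx, fun x hx y hy hxy => hg2 hx hy (σ.injective hxy)⟩
  · rintro ⟨g, hg1, hg2⟩
    refine ⟨σ.symm ∘ g, fun x hx => by simpa using hg1 x hx,
      fun x hx y hy hxy => hg2 hx hy (σ.symm.injective hxy)⟩

lemma tileVerts_comp {n k : ℕ} (i : ColK n) (f : Fin k → Fin (k+1) → Fin n)
    (σ : Equiv.Perm (Fin (k+1))) :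
    tileVertsK n k i (fun p => f p ∘ σ) = tileVertsK n k i f := by
  unfold tileVertsK
  ext v
  simp only [Set.mem_setOf_eq, isTransOf_comp]

/-- the canonical full transversal attached to an injective index choice `τ`. -/
lemma fullTrans_spec {n k : ℕ} (hk : 1 ≤ k) (f : Fin k → Fin (k+1) → Fin n)
    (τ : Fin k → Fin (k+1)) (hτ : Function.Injective τ) :
    IsA n k (Finset.univ.image (fun q => ((q, f q (τ q)) : HVtx n k))) ∧
    IsTransOf n k f (Finset.univ.image (fun q => ((q, f q (τ q)) : HVtx n k))) := by
  classical
  set a := Finset.univ.image (fun q => ((q, f q (τ q)) : HVtx n k)) with ha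
  have hinj : Function.Injective (fun q => ((q, f q (τ q)) : HVtx n k)) := by
    intro q q' h
    exact congrArg Prod.fst h
  have hcard : a.card = k := by
    rw [ha, Finset.card_image_of_injective _ hinj, Finset.card_univ, Fintype.card_fin]
  have hPT : PartialTrans n k a := by
    intro x hx y hy hxy
    simp only [ha, Finset.mem_image, Finset.mem_univ, true_and] at hx hy
    obtain ⟨q, rfl⟩ := hx
    obtain ⟨q', rfl⟩ := hy
    simp only at hxy
    subst hxy; rfl
  have htrans : IsTransOf n k f a := by
    refine ⟨fun x => τ x.1, ?_, ?_⟩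
    · intro x hx
      simp only [ha, Finset.mem_image, Finset.mem_univ, true_and] at hx
      obtain ⟨q, rfl⟩ := hx
      rfl
    · intro x hx y hy hxy
      exact hPT x (by exact_mod_cast hx) y (by exact_mod_cast hy) (hτ hxy)
  refine ⟨⟨hcard, ?_⟩, htrans⟩
  -- a (k-1)-element subset
  have hne : a.Nonempty := by
    rw [← Finset.card_pos, hcard]; omega
  obtain ⟨x₀, hx₀⟩ := hne
  refine ⟨a.erase x₀, Finset.erase_subset _ _, ?_, ?_⟩
  · rw [Finset.card_erase_of_mem hx₀, hcard]
  · intro x hx y hy hxy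
    exact hPT x (Finset.mem_of_mem_erase hx) y (Finset.mem_of_mem_erase hy) hxy

section
variable {α : Type*} [DecidableEq α]
lemma exists_perm_two {a₁ a₂ b₁ b₂ : α} (ha : a₁ ≠ a₂) (hb : b₁ ≠ b₂) :
    ∃ π : Equiv.Perm α, π a₁ = b₁ ∧ π a₂ = b₂ := by
  set s := Equiv.swap a₁ b₁ with hs
  have hc : s a₂ ≠ b₁ := by
    intro h
    have := s.injective (a₂ := a₁) (by rw [h, Equiv.swap_apply_left])
    exact ha this.symm
  refine ⟨s.trans (Equiv.swap (s a₂) b₂), ?_, ?_⟩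
  · have h1 : s a₁ = b₁ := Equiv.swap_apply_left _ _
    simp only [Equiv.trans_apply, h1]
    rw [Equiv.swap_apply_of_ne_of_ne (Ne.symm hc) hb]
  · simp only [Equiv.trans_apply, Equiv.swap_apply_left]
end

lemma fullTrans_pt {n k : ℕ} (f : Fin k → Fin (k+1) → Fin n) (τ : Fin k → Fin (k+1)) :
    PartialTrans n k (Finset.univ.image (fun q => ((q, f q (τ q)) : HVtx n k))) := by
  intro x hx y hy hxy
  simp only [Finset.mem_image, Finset.mem_univ, true_and] at hx hy
  obtain ⟨q, rfl⟩ := hx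
  obtain ⟨q', rfl⟩ := hy
  simp only at hxy
  subst hxy; rfl

lemma tile_unique {n k : ℕ} (hk : 2 ≤ k) {i i' : ColK n} {f f' : Fin k → Fin (k+1) → Fin n}
    (hf : ∀ p, Function.Injective (f p)) (hf' : ∀ p, Function.Injective (f' p))
    (hEq : tileVertsK n k i f = tileVertsK n k i' f') :
    i = i' ∧ ∃ σ : Equiv.Perm (Fin (k+1)), ∀ p, f' p = f p ∘ σ := by
  classical
  have hk1 : 1 ≤ k := by omega
  -- transfer of transversality
  have key : ∀ a, IsA n k a → IsTransOf n k f a → IsTransOf n k f' a := by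
    intro a hA ht
    have hmem : Sum.inl a ∈ tileVertsK n k i f := Or.inl ⟨a, hA, ht, rfl⟩
    rw [hEq] at hmem
    rcases hmem with ⟨a', _, ht', h⟩ | ⟨a', _, _, h⟩
    · obtain rfl : a = a' := Sum.inl.inj h
      exact ht'
    · exact absurd h (by simp)
  have key' : ∀ a, IsA n k a → IsTransOf n k f' a → IsTransOf n k f a := by
    intro a hA ht
    have hmem : Sum.inl a ∈ tileVertsK n k i' f' := Or.inl ⟨a, hA, ht, rfl⟩
    rw [← hEq] at hmem
    rcases hmem with ⟨a', _, ht', h⟩ | ⟨a', _, _, h⟩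
    · obtain rfl : a = a' := Sum.inl.inj h
      exact ht'
    · exact absurd h (by simp)
  -- i = i'
  have hii : i = i' := by
    obtain ⟨hA, ht⟩ := fullTrans_spec hk1 f Fin.castSucc (Fin.castSucc_injective k)
    set a := Finset.univ.image (fun q => ((q, f q (Fin.castSucc q)) : HVtx n k)) with ha
    have hne : a.Nonempty := by
      rw [← Finset.card_pos, hA.1]; omega
    obtain ⟨x₀, hx₀⟩ := hne
    have hA' : IsA' n k (a.erase x₀) := by
      constructor
      · rw [Finset.card_erase_of_mem hx₀, hA.1]
      · intro x hx y hy hxy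
        exact fullTrans_pt f _ x (Finset.mem_of_mem_erase hx) y (Finset.mem_of_mem_erase hy) hxy
    have hmem : Sum.inr (i, a.erase x₀) ∈ tileVertsK n k i f :=
      Or.inr ⟨a.erase x₀, hA', isTransOf_subset ht (Finset.erase_subset _ _), rfl⟩
    rw [hEq] at hmem
    rcases hmem with ⟨a', _, _, h⟩ | ⟨a', _, _, h⟩
    · exact absurd h (by simp)
    · obtain ⟨h1, _⟩ := Prod.mk.inj (Sum.inr.inj h)
      exact h1
  -- ranges
  have hrange : ∀ p ℓ, ∃ ℓ', f' p ℓ' = f p ℓ := by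
    intro p ℓ
    set τ : Fin k → Fin (k+1) := (Equiv.swap ℓ (Fin.castSucc p)) ∘ Fin.castSucc with hτdef
    have hτ : Function.Injective τ :=
      (Equiv.injective _).comp (Fin.castSucc_injective k)
    obtain ⟨hA, ht⟩ := fullTrans_spec hk1 f τ hτ
    obtain ⟨g, hg1, _⟩ := key _ hA ht
    have hx : ((p, f p (τ p)) : HVtx n k) ∈
        Finset.univ.image (fun q => ((q, f q (τ q)) : HVtx n k)) :=
      Finset.mem_image_of_mem _ (Finset.mem_univ p)
    have := hg1 _ hx
    simp only at this
    have hτp : τ p = ℓ := by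
      simp only [hτdef, Function.comp_apply, Equiv.swap_apply_right]
    rw [hτp] at this
    exact ⟨_, this.symm⟩
  set s : Fin k → Fin (k+1) → Fin (k+1) := fun p ℓ => (hrange p ℓ).choose with hsdef
  have hs : ∀ p ℓ, f' p (s p ℓ) = f p ℓ := fun p ℓ => (hrange p ℓ).choose_spec
  -- s is independent of p
  have hcom : ∀ p q ℓ, s p ℓ = s q ℓ := by
    intro p q ℓ
    by_cases hpq : p = q
    · rw [hpq]
    by_contra hne'
    obtain ⟨π, hπ1, hπ2⟩ := exists_perm_two
      (fun h => hpq (Fin.castSucc_injective k h)) hne'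
    set τ' : Fin k → Fin (k+1) := π ∘ Fin.castSucc with hτ'def
    have hτ' : Function.Injective τ' := (Equiv.injective _).comp (Fin.castSucc_injective k)
    obtain ⟨hA, ht⟩ := fullTrans_spec hk1 f' τ' hτ'
    obtain ⟨g, hg1, hg2⟩ := key' _ hA ht
    have hxmem : ((p, f' p (τ' p)) : HVtx n k) ∈
        Finset.univ.image (fun q => ((q, f' q (τ' q)) : HVtx n k)) :=
      Finset.mem_image_of_mem _ (Finset.mem_univ p)
    have hymem : ((q, f' q (τ' q)) : HVtx n k) ∈
        Finset.univ.image (fun r => ((r, f' r (τ' r)) : HVtx n k)) :=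
      Finset.mem_image_of_mem _ (Finset.mem_univ q)
    have hτ'p : τ' p = s p ℓ := hπ1
    have hτ'q : τ' q = s q ℓ := hπ2
    have hx2 : (( p, f' p (τ' p)) : HVtx n k).2 = f p ℓ := by
      simp only [hτ'p, hs]
    have hy2 : ((q, f' q (τ' q)) : HVtx n k).2 = f q ℓ := by
      simp only [hτ'q, hs]
    have e1 := hg1 _ hxmem
    have e2 := hg1 _ hymem
    simp only at e1 e2
    rw [show f' p (τ' p) = f p ℓ from hx2] at e1
    rw [show f' q (τ' q) = f q ℓ from hy2] at e2
    have hgx : g (p, f p ℓ) = ℓ := (hf p e1.symm)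
    have hgy : g (q, f q ℓ) = ℓ := (hf q e2.symm)
    have hxmem' : ((p, f p ℓ) : HVtx n k) ∈
        Finset.univ.image (fun q => ((q, f' q (τ' q)) : HVtx n k)) := by
      rw [← show f' p (τ' p) = f p ℓ from hx2]; exact hxmem
    have hymem' : ((q, f q ℓ) : HVtx n k) ∈
        Finset.univ.image (fun r => ((r, f' r (τ' r)) : HVtx n k)) := by
      rw [← show f' q (τ' q) = f q ℓ from hy2]; exact hymem
    have : ((p, f p ℓ) : HVtx n k) = (q, f q ℓ) :=
      hg2 (by exact_mod_cast hxmem') (by exact_mod_cast hymem') (hgx.trans hgy.symm)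
    exact hpq (congrArg Prod.fst this)
  -- build σ
  have hp0 : (0 : ℕ) < k := by omega
  set σ₀ : Fin (k+1) → Fin (k+1) := s ⟨0, hp0⟩ with hσ₀def
  have hσ₀ : ∀ p ℓ, f' p (σ₀ ℓ) = f p ℓ := by
    intro p ℓ
    rw [hσ₀def]
    rw [hcom ⟨0, hp0⟩ p ℓ]
    exact hs p ℓ
  have hσinj : Function.Injective σ₀ := by
    intro ℓ ℓ' h
    apply hf ⟨0, hp0⟩
    rw [← hσ₀ ⟨0, hp0⟩ ℓ, ← hσ₀ ⟨0, hp0⟩ ℓ', h]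
  set σ : Equiv.Perm (Fin (k+1)) :=
    Equiv.ofBijective σ₀ (Finite.injective_iff_bijective.mp hσinj) with hσdef
  refine ⟨hii, σ.symm, ?_⟩
  intro p
  funext m
  have : σ (σ.symm m) = m := Equiv.apply_symm_apply _ _
  have hσm : σ₀ (σ.symm m) = m := this
  simp only [Function.comp_apply]
  calc f' p m = f' p (σ₀ (σ.symm m)) := by rw [hσm]
    _ = f p (σ.symm m) := hσ₀ _ _

noncomputable def tileFin (n k : ℕ) (i : ColK n) (f : Fin k → Fin (k+1) → Fin n) :
    Finset (VHK n k) :=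
  (Set.toFinite (tileVertsK n k i f)).toFinset

lemma coe_tileFin (n k : ℕ) (i : ColK n) (f : Fin k → Fin (k+1) → Fin n) :
    (tileFin n k i f : Set (VHK n k)) = tileVertsK n k i f :=
  Set.Finite.coe_toFinset _

open Classical in
noncomputable def DD (n k : ℕ) (v : VHK n k) : Finset (ColK n × (Fin k → Fin (k+1) → Fin n)) :=
  Finset.univ.filter
    (fun w => (∀ p, Function.Injective (w.2 p)) ∧ v ∈ tileVertsK n k w.1 w.2)

lemma deg_eq {n k : ℕ} (hk : 2 ≤ k) (v : VHK n k) :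
    (DD n k v).card = Nat.factorial (k+1) * degK n k v := by
  classical
  set Φ : ColK n × (Fin k → Fin (k+1) → Fin n) → Finset (VHK n k) :=
    fun w => tileFin n k w.1 w.2 with hΦ
  have hset : {T : Finset (VHK n k) | IsTileK n k T ∧ v ∈ T} = ↑((DD n k v).image Φ) := by
    ext T
    simp only [Set.mem_setOf_eq, Finset.coe_image, Set.mem_image, Finset.mem_coe,
      DD, Finset.mem_filter, Finset.mem_univ, true_and]
    constructor
    · rintro ⟨⟨i, f, hfinj, hTf⟩, hvT⟩
      refine ⟨(i, f), ⟨hfinj, ?_⟩, ?_⟩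
      · rw [← hTf]; exact hvT
      · apply Finset.coe_injective
        rw [coe_tileFin, ← hTf]
    · rintro ⟨⟨i, f⟩, ⟨hfinj, hv⟩, rfl⟩
      refine ⟨⟨i, f, hfinj, coe_tileFin _ _ _ _⟩, ?_⟩
      rw [← Finset.mem_coe, coe_tileFin]
      exact hv
  have hdeg : degK n k v = ((DD n k v).image Φ).card := by
    rw [degK, hset, Set.ncard_coe_finset]
  rw [hdeg]
  rw [Finset.card_eq_sum_card_image Φ (DD n k v)]
  rw [Finset.sum_congr rfl (fun T hT => ?_), Finset.sum_const, smul_eq_mul, Nat.mul_comm]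
  -- each fiber has size (k+1)!
  obtain ⟨w₀, hw₀D, hw₀T⟩ := Finset.mem_image.mp hT
  have hw₀ := (Finset.mem_filter.mp hw₀D).2
  have hfiber : (DD n k v).filter (fun w => Φ w = T) =
      Finset.univ.image (fun σ : Equiv.Perm (Fin (k+1)) => (w₀.1, fun p => w₀.2 p ∘ σ)) := by
    ext w
    simp only [Finset.mem_filter, Finset.mem_image, Finset.mem_univ, true_and, DD]
    constructor
    · rintro ⟨⟨hinj, hv⟩, hΦw⟩
      have htv : tileVertsK n k w₀.1 w₀.2 = tileVertsK n k w.1 w.2 := by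
        rw [← coe_tileFin n k w₀.1 w₀.2, ← coe_tileFin n k w.1 w.2]
        exact congrArg _ (hw₀T.trans hΦw.symm)
      obtain ⟨hi, σ, hσ⟩ := tile_unique hk hw₀.1 hinj htv
      refine ⟨σ, ?_⟩
      apply Prod.ext
      · exact hi
      · funext p
        exact (hσ p).symm
    · rintro ⟨σ, rfl⟩
      have htv : tileVertsK n k w₀.1 (fun p => w₀.2 p ∘ σ) = tileVertsK n k w₀.1 w₀.2 :=
        tileVerts_comp _ _ _
      refine ⟨⟨fun p => (hw₀.1 p).comp σ.injective, ?_⟩, ?_⟩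
      · rw [htv]; exact hw₀.2
      · rw [← hw₀T, hΦ]
        apply Finset.coe_injective
        rw [coe_tileFin, coe_tileFin]
        exact htv
  rw [hfiber, Finset.card_image_of_injective _ ?_, Finset.card_univ, Fintype.card_perm,
    Fintype.card_fin]
  intro σ σ' h
  have h2 := congrArg Prod.snd h
  simp only at h2
  have hp0 : (0:ℕ) < k := by omega
  have := congrFun h2 ⟨0, hp0⟩
  ext ℓ
  have := congrFun this ℓ
  simp only [Function.comp_apply] at this
  exact Fin.val_eq_of_eq (hw₀.1 ⟨0, hp0⟩ this)

open Classical in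
noncomputable def FF (n k : ℕ) (a : Finset (HVtx n k)) : Finset (Fin k → Fin (k+1) → Fin n) :=
  Finset.univ.filter (fun f => (∀ p, Function.Injective (f p)) ∧ IsTransOf n k f a)

lemma DD_inl {n k : ℕ} {a : Finset (HVtx n k)} (ha : IsA n k a) :
    (DD n k (Sum.inl a)).card = ((n+1)/2) * (FF n k a).card := by
  classical
  have : DD n k (Sum.inl a) = (Finset.univ : Finset (ColK n)) ×ˢ FF n k a := by
    ext ⟨i, f⟩
    simp only [DD, FF, Finset.mem_filter, Finset.mem_univ, true_and, Finset.mem_product]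
    constructor
    · rintro ⟨hinj, hv⟩
      refine ⟨hinj, ?_⟩
      rcases hv with ⟨a', _, ht', h⟩ | ⟨a', _, _, h⟩
      · obtain rfl : a = a' := Sum.inl.inj h
        exact ht'
      · exact absurd h (by simp)
    · rintro ⟨hinj, ht⟩
      exact ⟨hinj, Or.inl ⟨a, ha, ht, rfl⟩⟩
  rw [this, Finset.card_product, Finset.card_univ, Fintype.card_fin]

lemma DD_inr {n k : ℕ} {a : Finset (HVtx n k)} (i₀ : ColK n) (ha : IsA' n k a) :
    (DD n k (Sum.inr (i₀, a))).card = (FF n k a).card := by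
  classical
  have : DD n k (Sum.inr (i₀, a)) = (FF n k a).image (fun f => (i₀, f)) := by
    ext ⟨i, f⟩
    simp only [DD, FF, Finset.mem_filter, Finset.mem_univ, true_and, Finset.mem_image,
      Prod.mk.injEq]
    constructor
    · rintro ⟨hinj, hv⟩
      rcases hv with ⟨a', _, _, h⟩ | ⟨a', ha', ht', h⟩
      · exact absurd h (by simp)
      · obtain ⟨h1, h2⟩ := Prod.mk.inj (Sum.inr.inj h)
        exact ⟨f, ⟨hinj, by rw [← h2] at ht'; exact ht'⟩, h1, rfl⟩
    · rintro ⟨f', ⟨hinj, ht⟩, rfl, rfl⟩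
      exact ⟨hinj, Or.inr ⟨a, ha, ht, rfl⟩⟩
  rw [this, Finset.card_image_of_injective _ (fun f f' h => (Prod.mk.inj h).2)]

lemma sub_pow_le_descFactorial (X : ℕ) : ∀ t : ℕ, (X - t)^t ≤ X.descFactorial t := by
  intro t
  induction t with
  | zero => simp
  | succ t ih =>
    rw [Nat.descFactorial_succ, pow_succ]
    calc (X-(t+1))^t * (X-(t+1)) ≤ (X - t)^t * (X - t) :=
          Nat.mul_le_mul (Nat.pow_le_pow_left (by omega) t) (by omega)
      _ = (X - t) * (X - t)^t := Nat.mul_comm _ _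
      _ ≤ (X - t) * X.descFactorial t := Nat.mul_le_mul_left _ ih

lemma pow_sub_bound (N s : ℕ) : ∀ t : ℕ, N^(t+1) ≤ (N - s)^(t+1) + (t+1) * s * N^t := by
  intro t
  induction t with
  | zero => simpa using (by omega : N ≤ N - s + s)
  | succ t ih =>
    calc N^(t+2) = N * N^(t+1) := by ring
      _ ≤ N * ((N - s)^(t+1) + (t+1) * s * N^t) := Nat.mul_le_mul_left _ ih
      _ = N * (N-s)^(t+1) + (t+1) * s * (N * N^t) := by ring
      _ ≤ (N - s + s) * (N-s)^(t+1) + (t+1) * s * N^(t+1) := by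
          have : N ≤ N - s + s := by omega
          have h2 : N * N^t = N^(t+1) := by ring
          rw [h2]
          exact Nat.add_le_add_right (Nat.mul_le_mul_right _ this) _
      _ = (N-s)^(t+2) + (s * (N-s)^(t+1) + (t+1) * s * N^(t+1)) := by ring
      _ ≤ (N-s)^(t+2) + (s * N^(t+1) + (t+1) * s * N^(t+1)) := by
          refine Nat.add_le_add_left (Nat.add_le_add_right ?_ _) _
          exact Nat.mul_le_mul_left _ (Nat.pow_le_pow_left (Nat.sub_le _ _) _)
      _ = (N-s)^(t+2) + (t+2) * s * N^(t+1) := by ring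

open Classical in
lemma prescribe_bounds {N M : ℕ} (pos : Finset (Fin M)) (w : Fin M → Fin N)
    (hw : Set.InjOn w pos) :
    (N - M) ^ (M - pos.card) ≤
      (Finset.univ.filter (fun g : Fin M → Fin N =>
        Function.Injective g ∧ ∀ ℓ ∈ pos, g ℓ = w ℓ)).card ∧
    (Finset.univ.filter (fun g : Fin M → Fin N =>
        Function.Injective g ∧ ∀ ℓ ∈ pos, g ℓ = w ℓ)).card ≤ N ^ (M - pos.card) := by
  classical
  set S := Finset.univ.filter (fun g : Fin M → Fin N =>
        Function.Injective g ∧ ∀ ℓ ∈ pos, g ℓ = w ℓ) with hS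
  set vals := pos.image w with hvals
  have hc : vals.card = pos.card := Finset.card_image_of_injOn hw
  have hcM : pos.card ≤ M := by
    simpa using Finset.card_le_card (Finset.subset_univ pos)
  constructor
  · -- lower bound
    set Θ : (↥(posᶜ : Finset (Fin M)) ↪ ↥(valsᶜ : Finset (Fin N))) → (Fin M → Fin N) :=
      fun e ℓ => if hℓ : ℓ ∈ pos then w ℓ else ↑(e ⟨ℓ, by simp [hℓ]⟩) with hΘ
    have hmaps : ∀ e, Θ e ∈ S := by
      intro e
      rw [hS, Finset.mem_filter]
      refine ⟨Finset.mem_univ _, ?_, ?_⟩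
      · intro ℓ₁ ℓ₂ h
        by_cases h1 : ℓ₁ ∈ pos <;> by_cases h2 : ℓ₂ ∈ pos
        · exact hw h1 h2 (by simpa only [hΘ, dif_pos h1, dif_pos h2] using h)
        · exfalso
          simp only [hΘ, dif_pos h1, dif_neg h2] at h
          have := (e ⟨ℓ₂, by simp [h2]⟩).2
          rw [Finset.mem_compl] at this
          exact this (by rw [← h]; exact Finset.mem_image_of_mem _ h1)
        · exfalso
          simp only [hΘ, dif_neg h1, dif_pos h2] at h
          have := (e ⟨ℓ₁, by simp [h1]⟩).2
          rw [Finset.mem_compl] at this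
          exact this (by rw [h]; exact Finset.mem_image_of_mem _ h2)
        · simp only [hΘ, dif_neg h1, dif_neg h2] at h
          have := e.injective (Subtype.coe_injective h)
          have := congrArg Subtype.val this
          simpa using this
      · intro ℓ hℓ
        simp [hΘ, dif_pos hℓ]
    have hinjΘ : Function.Injective Θ := by
      intro e e' h
      apply Function.Embedding.ext
      intro x
      apply Subtype.ext
      have h0 := congrFun h ↑x
      simp only [hΘ, dif_neg (Finset.mem_compl.mp x.2), Subtype.coe_eta] at h0
      exact h0
    have hle : Fintype.card (↥(posᶜ : Finset (Fin M)) ↪ ↥(valsᶜ : Finset (Fin N))) ≤ S.card := by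
      rw [← Finset.card_univ]
      exact Finset.card_le_card_of_injOn Θ (fun e _ => hmaps e) (hinjΘ.injOn)
    have hcard : Fintype.card (↥(posᶜ : Finset (Fin M)) ↪ ↥(valsᶜ : Finset (Fin N))) =
        (N - pos.card).descFactorial (M - pos.card) := by
      rw [Fintype.card_embedding_eq, Fintype.card_coe, Fintype.card_coe, Finset.card_compl,
        Finset.card_compl, Fintype.card_fin, Fintype.card_fin, hc]
    calc (N - M) ^ (M - pos.card) ≤ ((N - pos.card) - (M - pos.card)) ^ (M - pos.card) :=
          Nat.pow_le_pow_left (by omega) _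
      _ ≤ (N - pos.card).descFactorial (M - pos.card) := sub_pow_le_descFactorial _ _
      _ ≤ S.card := by rw [← hcard]; exact hle
  · -- upper bound
    set ρ : (Fin M → Fin N) → (↥(posᶜ : Finset (Fin M)) → Fin N) :=
      fun g x => g ↑x with hρ
    have : S.card ≤ Fintype.card (↥(posᶜ : Finset (Fin M)) → Fin N) := by
      rw [← Finset.card_univ]
      apply Finset.card_le_card_of_injOn ρ (fun g _ => Finset.mem_univ _)
      intro g hg g' hg' h
      rw [Finset.mem_coe, hS, Finset.mem_filter] at hg hg'
      funext ℓ
      by_cases hℓ : ℓ ∈ pos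
      · rw [hg.2.2 ℓ hℓ, hg'.2.2 ℓ hℓ]
      · exact congrFun h ⟨ℓ, Finset.mem_compl.mpr hℓ⟩
    calc S.card ≤ Fintype.card (↥(posᶜ : Finset (Fin M)) → Fin N) := this
      _ = N ^ (M - pos.card) := by
          rw [Fintype.card_fun, Fintype.card_fin, Fintype.card_coe, Finset.card_compl,
            Fintype.card_fin]

open Classical in
lemma FF_bounds {n k : ℕ} (hn : 1 ≤ n) (a : Finset (HVtx n k)) (hm : a.card ≤ k) :
    (k+1).descFactorial a.card * (n - (k+1)) ^ (k*(k+1) - a.card) ≤ (FF n k a).card ∧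
    (FF n k a).card ≤ (k+1).descFactorial a.card * n ^ (k*(k+1) - a.card) := by
  classical
  set τ : Finset (↥a → Fin (k+1)) :=
    Finset.univ.filter (fun h : ↥a → Fin (k+1) => Function.Injective h) with hτdef
  set Ψ : (Fin k → Fin (k+1) → Fin n) → (↥a → Fin (k+1)) :=
    fun f x => if hx : ∃ ℓ, f (↑x : HVtx n k).1 ℓ = (↑x : HVtx n k).2 then hx.choose else 0
    with hΨdef
  have hΨg : ∀ f ∈ FF n k a, ∀ (g : HVtx n k → Fin (k+1)),
      (∀ x ∈ a, x.2 = f x.1 (g x)) → ∀ x : ↥a, Ψ f x = g ↑x := by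
    intro f hf g hg1 x
    rw [FF, Finset.mem_filter] at hf
    have hx : ∃ ℓ, f (↑x : HVtx n k).1 ℓ = (↑x : HVtx n k).2 := ⟨g ↑x, (hg1 _ x.2).symm⟩
    simp only [hΨdef, dif_pos hx]
    exact hf.2.1 _ (hx.choose_spec.trans (hg1 _ x.2))
  have hΨmem : ∀ f ∈ FF n k a, Ψ f ∈ τ := by
    intro f hf
    obtain ⟨-, -, g, hg1, hg2⟩ := Finset.mem_filter.mp hf
    rw [hτdef, Finset.mem_filter]
    refine ⟨Finset.mem_univ _, ?_⟩
    intro x y hxy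
    rw [hΨg f hf g hg1 x, hΨg f hf g hg1 y] at hxy
    exact Subtype.ext (hg2 x.2 y.2 hxy)
  have hcards : (FF n k a).card =
      ∑ h ∈ τ, ((FF n k a).filter (fun f => Ψ f = h)).card :=
    Finset.card_eq_sum_card_fiberwise hΨmem
  -- per-h analysis
  have hτcard : τ.card = (k+1).descFactorial a.card := by
    rw [hτdef, ← Fintype.card_subtype]
    rw [Fintype.card_congr (Equiv.subtypeInjectiveEquivEmbedding (↥a) (Fin (k+1)))]
    rw [Fintype.card_embedding_eq, Fintype.card_fin, Fintype.card_coe]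
  have hfib : ∀ h ∈ τ,
      (n - (k+1)) ^ (k*(k+1) - a.card) ≤ ((FF n k a).filter (fun f => Ψ f = h)).card ∧
      ((FF n k a).filter (fun f => Ψ f = h)).card ≤ n ^ (k*(k+1) - a.card) := by
    intro h hh
    have hhinj : Function.Injective h := (Finset.mem_filter.mp hh).2
    set wp : Fin k → Fin (k+1) → Fin n := fun p ℓ =>
      if hx : ∃ x : ↥a, (↑x : HVtx n k).1 = p ∧ h x = ℓ then (↑hx.choose : HVtx n k).2
      else ⟨0, hn⟩ with hwpdef
    set posp : Fin k → Finset (Fin (k+1)) := fun p =>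
      (Finset.univ.filter (fun x : ↥a => (↑x : HVtx n k).1 = p)).image h with hpospdef
    have hwp_eval : ∀ (x : ↥a), wp (↑x : HVtx n k).1 (h x) = (↑x : HVtx n k).2 := by
      intro x
      have hx : ∃ y : ↥a, (↑y : HVtx n k).1 = (↑x : HVtx n k).1 ∧ h y = h x := ⟨x, rfl, rfl⟩
      simp only [hwpdef, dif_pos hx]
      have := hx.choose_spec
      have hxy : hx.choose = x := hhinj this.2
      rw [hxy]
    have hSp : ((FF n k a).filter (fun f => Ψ f = h)) = Fintype.piFinset (fun p =>
        Finset.univ.filter (fun g : Fin (k+1) → Fin n =>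
          Function.Injective g ∧ ∀ ℓ ∈ posp p, g ℓ = wp p ℓ)) := by
      ext f
      simp only [Finset.mem_filter, Fintype.mem_piFinset, Finset.mem_univ, true_and]
      constructor
      · rintro ⟨hfFF, hΨf⟩
        obtain ⟨-, hinj, g, hg1, hg2⟩ := Finset.mem_filter.mp hfFF
        intro p
        refine ⟨hinj p, ?_⟩
        intro ℓ hℓ
        rw [hpospdef] at hℓ
        simp only [Finset.mem_image, Finset.mem_filter, Finset.mem_univ, true_and] at hℓ
        obtain ⟨x, hx1, hx2⟩ := hℓ
        have e1 : f p (h x) = (↑x : HVtx n k).2 := by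
          have h2 : h x = g ↑x := (congrFun hΨf x).symm.trans (hΨg f hfFF g hg1 x)
          rw [h2, ← hx1]
          exact (hg1 _ x.2).symm
        rw [← hx2, e1, ← hx1, hwp_eval x]
      · intro hall
        have hinj : ∀ p, Function.Injective (f p) := fun p => (hall p).1
        have key : ∀ x : ↥a, f (↑x : HVtx n k).1 (h x) = (↑x : HVtx n k).2 := by
          intro x
          have hmem : h x ∈ posp (↑x : HVtx n k).1 := by
            rw [hpospdef]
            exact Finset.mem_image_of_mem h (by simp)
          rw [(hall _).2 _ hmem, hwp_eval x]
        have hfFF : f ∈ FF n k a := by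
          rw [FF, Finset.mem_filter]
          refine ⟨Finset.mem_univ _, hinj, ?_⟩
          refine ⟨fun y => if hy : y ∈ a then h ⟨y, hy⟩ else 0, ?_, ?_⟩
          · intro x hx
            have hkx := key ⟨x, hx⟩
            simp only [dif_pos hx]
            exact hkx.symm
          · intro y hy z hz hyz
            rw [Finset.mem_coe] at hy hz
            simp only [dif_pos hy, dif_pos hz] at hyz
            exact congrArg Subtype.val (hhinj hyz)
        refine ⟨hfFF, ?_⟩
        funext x
        have hex : ∃ ℓ, f (↑x : HVtx n k).1 ℓ = (↑x : HVtx n k).2 := ⟨h x, key x⟩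
        simp only [hΨdef, dif_pos hex]
        exact hinj _ (hex.choose_spec.trans (key x).symm)
    have hwInj : ∀ p, Set.InjOn (wp p) (posp p) := by
      intro p ℓ₁ h₁ ℓ₂ h₂ hval
      rw [hpospdef] at h₁ h₂
      simp only [Finset.coe_image, Set.mem_image, Finset.coe_filter, Set.mem_setOf_eq,
        Finset.mem_univ, true_and] at h₁ h₂
      obtain ⟨x₁, hx₁, rfl⟩ := h₁
      obtain ⟨x₂, hx₂, rfl⟩ := h₂
      rw [show wp p (h x₁) = (↑x₁ : HVtx n k).2 by rw [← hx₁]; exact hwp_eval x₁,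
        show wp p (h x₂) = (↑x₂ : HVtx n k).2 by rw [← hx₂]; exact hwp_eval x₂] at hval
      have : (↑x₁ : HVtx n k) = ↑x₂ := Prod.ext (hx₁.trans hx₂.symm) hval
      rw [Subtype.ext this]
    -- counting
    have hposcard : ∀ p, (posp p).card =
        (Finset.univ.filter (fun x : ↥a => (↑x : HVtx n k).1 = p)).card := by
      intro p
      rw [hpospdef]
      exact Finset.card_image_of_injOn (hhinj.injOn)
    have hsumc : ∑ p, (posp p).card = a.card := by
      rw [Finset.sum_congr rfl (fun p _ => hposcard p)]
      rw [← Finset.card_eq_sum_card_fiberwise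
        (f := fun x : ↥a => (↑x : HVtx n k).1) (s := Finset.univ) (t := Finset.univ)
        (fun x _ => Finset.mem_univ _)]
      rw [Finset.card_univ, Fintype.card_coe]
    have hcle : ∀ p, (posp p).card ≤ k+1 := by
      intro p
      calc (posp p).card ≤ (Finset.univ : Finset (Fin (k+1))).card :=
            Finset.card_le_card (Finset.subset_univ _)
        _ = k+1 := by rw [Finset.card_univ, Fintype.card_fin]
    have hexp : ∑ p, ((k+1) - (posp p).card) = k*(k+1) - a.card := by
      have h1 : ∑ p, ((k+1) - (posp p).card) + ∑ p, (posp p).card = k * (k+1) := by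
        rw [← Finset.sum_add_distrib]
        rw [Finset.sum_congr rfl (fun p _ => show (k+1) - (posp p).card + (posp p).card = k+1
          by have := hcle p; omega)]
        simp [Finset.card_univ, Nat.mul_comm]
      rw [hsumc] at h1
      omega
    rw [hSp, Fintype.card_piFinset]
    constructor
    · calc (n - (k+1)) ^ (k*(k+1) - a.card)
          = ∏ p, (n - (k+1)) ^ ((k+1) - (posp p).card) := by
            rw [Finset.prod_pow_eq_pow_sum, hexp]
        _ ≤ ∏ p, (Finset.univ.filter (fun g : Fin (k+1) → Fin n =>
              Function.Injective g ∧ ∀ ℓ ∈ posp p, g ℓ = wp p ℓ)).card :=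
            Finset.prod_le_prod' (fun p _ => (prescribe_bounds (posp p) (wp p) (hwInj p)).1)
    · calc ∏ p, (Finset.univ.filter (fun g : Fin (k+1) → Fin n =>
              Function.Injective g ∧ ∀ ℓ ∈ posp p, g ℓ = wp p ℓ)).card
          ≤ ∏ p, n ^ ((k+1) - (posp p).card) :=
            Finset.prod_le_prod' (fun p _ => (prescribe_bounds (posp p) (wp p) (hwInj p)).2)
        _ = n ^ (k*(k+1) - a.card) := by rw [Finset.prod_pow_eq_pow_sum, hexp]
  -- assemble
  constructor
  · calc (k+1).descFactorial a.card * (n - (k+1)) ^ (k*(k+1) - a.card)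
        = ∑ _h ∈ τ, (n - (k+1)) ^ (k*(k+1) - a.card) := by
          rw [Finset.sum_const, smul_eq_mul, hτcard]
      _ ≤ ∑ h ∈ τ, ((FF n k a).filter (fun f => Ψ f = h)).card :=
          Finset.sum_le_sum (fun h hh => (hfib h hh).1)
      _ = (FF n k a).card := hcards.symm
  · calc (FF n k a).card
        = ∑ h ∈ τ, ((FF n k a).filter (fun f => Ψ f = h)).card := hcards
      _ ≤ ∑ _h ∈ τ, n ^ (k*(k+1) - a.card) :=
          Finset.sum_le_sum (fun h hh => (hfib h hh).2)
      _ = (k+1).descFactorial a.card * n ^ (k*(k+1) - a.card) := by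
          rw [Finset.sum_const, smul_eq_mul, hτcard]

lemma fac_desc_k {k : ℕ} : Nat.factorial (k+1) = (k+1).descFactorial k := by
  have h := Nat.factorial_mul_descFactorial (n := k+1) (k := k) (by omega)
  have h1 : k+1-k = 1 := by omega
  rw [h1] at h
  simpa [Nat.factorial] using h.symm

lemma fac_desc_k1 {k : ℕ} (hk : 2 ≤ k) :
    Nat.factorial (k+1) = 2 * ((k+1).descFactorial (k-1)) := by
  have h := Nat.factorial_mul_descFactorial (n := k+1) (k := k-1) (by omega)
  have h1 : k+1-(k-1) = 2 := by omega
  rw [h1] at h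
  rw [← h]
  norm_num [Nat.factorial]



/-- In the auxiliary hypergraph `H₁` built from `K^{(k)}_{n,…,n}` (with `k ≥ 2`), there
is a constant `c` depending only on `k` such that every vertex `v` of `H₁` satisfies
`|deg_{H₁}(v) − n^{k²+1}/2| ≤ c·n^{k²}`; in particular `H₁` is essentially `d`-regular
for `d = n^{k²+1}/2`. -/
theorem stmt16 (k : ℕ) (hk : 2 ≤ k) :
    ∃ c : ℝ, 0 < c ∧ ∀ n : ℕ, 1 ≤ n → ∀ v : VHK n k, IsVertexK n k v →
      |(degK n k v : ℝ) - (n : ℝ) ^ (k ^ 2 + 1) / 2| ≤ c * (n : ℝ) ^ (k ^ 2) := by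
  refine ⟨((k:ℝ)^2+1) * ((k:ℝ)+1), by positivity, ?_⟩
  intro n hn v hv
  have hksq : 4 ≤ k^2 := by
    have h1 : 2*2 ≤ k*k := Nat.mul_le_mul hk hk
    have h2 : k^2 = k*k := sq k
    omega
  have hkk : k*(k+1) = k^2 + k := by ring
  have hnn : (0:ℝ) ≤ (n:ℝ) := Nat.cast_nonneg n
  have hpnn : (0:ℝ) ≤ (n:ℝ)^(k^2) := by positivity
  have hB : (0:ℝ) ≤ ((k:ℝ)^2+1) * ((k:ℝ)+1) * (n:ℝ)^(k^2) := by positivity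
  cases v with
  | inl a =>
    have ha : IsA n k a := hv
    have e1 : Nat.factorial (k+1) * degK n k (Sum.inl a) = ((n+1)/2) * (FF n k a).card := by
      rw [← deg_eq hk _, DD_inl ha]
    obtain ⟨hF1, hF2⟩ := FF_bounds hn a (le_of_eq ha.1)
    rw [ha.1] at hF1 hF2
    have hExp : k*(k+1) - k = k^2 := by omega
    rw [hExp] at hF1 hF2
    have hLow : ((n+1)/2) * (n-(k+1))^(k^2) ≤ degK n k (Sum.inl a) := by
      have h2 : Nat.factorial (k+1) * (((n+1)/2) * (n-(k+1))^(k^2)) ≤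
          Nat.factorial (k+1) * degK n k (Sum.inl a) := by
        rw [e1]
        calc Nat.factorial (k+1) * (((n+1)/2) * (n-(k+1))^(k^2))
            = ((n+1)/2) * (Nat.factorial (k+1) * (n-(k+1))^(k^2)) := by ring
          _ ≤ ((n+1)/2) * (FF n k a).card :=
            Nat.mul_le_mul_left _ (by rw [fac_desc_k]; exact hF1)
      exact Nat.le_of_mul_le_mul_left h2 (Nat.factorial_pos _)
    have hUp : degK n k (Sum.inl a) ≤ ((n+1)/2) * n^(k^2) := by
      have h2 : Nat.factorial (k+1) * degK n k (Sum.inl a) ≤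
          Nat.factorial (k+1) * (((n+1)/2) * n^(k^2)) := by
        rw [e1]
        calc ((n+1)/2) * (FF n k a).card
            ≤ ((n+1)/2) * (Nat.factorial (k+1) * n^(k^2)) :=
              Nat.mul_le_mul_left _ (by rw [fac_desc_k]; exact hF2)
          _ = Nat.factorial (k+1) * (((n+1)/2) * n^(k^2)) := by ring
      exact Nat.le_of_mul_le_mul_left h2 (Nat.factorial_pos _)
    have hm1 : (k^2 - 1) + 1 = k^2 := by omega
    have hGap0 := pow_sub_bound n (k+1) (k^2 - 1)
    rw [hm1] at hGap0
    -- real versions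
    have rLo : (((n+1)/2 : ℕ):ℝ) * ((n-(k+1):ℕ):ℝ)^(k^2) ≤ (degK n k (Sum.inl a) : ℝ) := by
      exact_mod_cast hLow
    have rHi : (degK n k (Sum.inl a) : ℝ) ≤ (((n+1)/2 : ℕ):ℝ) * (n:ℝ)^(k^2) := by
      exact_mod_cast hUp
    have rGap : (n:ℝ)^(k^2) ≤ ((n-(k+1):ℕ):ℝ)^(k^2) +
        (k:ℝ)^2 * ((k:ℝ)+1) * (n:ℝ)^(k^2-1) := by exact_mod_cast hGap0
    have rq1 : (n:ℝ) ≤ 2*(((n+1)/2 : ℕ):ℝ) := by exact_mod_cast (by omega : n ≤ 2*((n+1)/2))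
    have rq2 : 2*(((n+1)/2 : ℕ):ℝ) ≤ (n:ℝ)+1 := by exact_mod_cast (by omega : 2*((n+1)/2) ≤ n+1)
    have hL0 : (0:ℝ) ≤ ((n-(k+1):ℕ):ℝ)^(k^2) := by positivity
    have rPow : (n:ℝ)^(k^2-1) * (n:ℝ) = (n:ℝ)^(k^2) := by rw [← pow_succ, hm1]
    have rPow2 : (n:ℝ)^(k^2) * (n:ℝ) = (n:ℝ)^(k^2+1) := by rw [← pow_succ]
    -- lower estimate : n^(k²+1) - k²(k+1) n^(k²) ≤ 2 deg
    have t0 : (n:ℝ) * ((n-(k+1):ℕ):ℝ)^(k^2) ≤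
        (2*(((n+1)/2 : ℕ):ℝ)) * ((n-(k+1):ℕ):ℝ)^(k^2) :=
      mul_le_mul_of_nonneg_right rq1 hL0
    have t1 : (n:ℝ) * ((n:ℝ)^(k^2) - (k:ℝ)^2*((k:ℝ)+1) * (n:ℝ)^(k^2-1)) ≤
        (n:ℝ) * ((n-(k+1):ℕ):ℝ)^(k^2) :=
      mul_le_mul_of_nonneg_left (by linarith) hnn
    have t2 : (n:ℝ) * ((n:ℝ)^(k^2) - (k:ℝ)^2*((k:ℝ)+1) * (n:ℝ)^(k^2-1)) =
        (n:ℝ)^(k^2+1) - (k:ℝ)^2*((k:ℝ)+1) * (n:ℝ)^(k^2) := by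
      rw [mul_sub]
      rw [show (n:ℝ) * (n:ℝ)^(k^2) = (n:ℝ)^(k^2+1) from by rw [mul_comm]; exact rPow2]
      rw [show (n:ℝ) * ((k:ℝ)^2*((k:ℝ)+1) * (n:ℝ)^(k^2-1)) =
        (k:ℝ)^2*((k:ℝ)+1) * ((n:ℝ)^(k^2-1) * (n:ℝ)) from by ring]
      rw [rPow]
    -- upper estimate : 2 deg ≤ n^(k²+1) + n^(k²)
    have t3 : (2*(((n+1)/2 : ℕ):ℝ)) * (n:ℝ)^(k^2) ≤ ((n:ℝ)+1) * (n:ℝ)^(k^2) :=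
      mul_le_mul_of_nonneg_right rq2 hpnn
    have t4 : ((n:ℝ)+1) * (n:ℝ)^(k^2) = (n:ℝ)^(k^2+1) + (n:ℝ)^(k^2) := by
      rw [add_mul, one_mul, mul_comm]
      rw [rPow2]
    -- coefficient comparisons
    have hC1 : (k:ℝ)^2*((k:ℝ)+1) * (n:ℝ)^(k^2) ≤
        2 * (((k:ℝ)^2+1) * ((k:ℝ)+1) * (n:ℝ)^(k^2)) := by
      have : (k:ℝ)^2*((k:ℝ)+1) ≤ 2 * (((k:ℝ)^2+1) * ((k:ℝ)+1)) := by
        nlinarith [sq_nonneg (k:ℝ), Nat.cast_nonneg (α := ℝ) k]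
      calc (k:ℝ)^2*((k:ℝ)+1) * (n:ℝ)^(k^2)
          ≤ 2 * (((k:ℝ)^2+1) * ((k:ℝ)+1)) * (n:ℝ)^(k^2) :=
            mul_le_mul_of_nonneg_right this hpnn
        _ = 2 * (((k:ℝ)^2+1) * ((k:ℝ)+1) * (n:ℝ)^(k^2)) := by ring
    have hC2 : (n:ℝ)^(k^2) ≤ 2 * (((k:ℝ)^2+1) * ((k:ℝ)+1) * (n:ℝ)^(k^2)) := by
      have : (1:ℝ) ≤ 2 * (((k:ℝ)^2+1) * ((k:ℝ)+1)) := by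
        nlinarith [sq_nonneg (k:ℝ), Nat.cast_nonneg (α := ℝ) k]
      calc (n:ℝ)^(k^2) = 1 * (n:ℝ)^(k^2) := (one_mul _).symm
        _ ≤ 2 * (((k:ℝ)^2+1) * ((k:ℝ)+1)) * (n:ℝ)^(k^2) :=
          mul_le_mul_of_nonneg_right this hpnn
        _ = 2 * (((k:ℝ)^2+1) * ((k:ℝ)+1) * (n:ℝ)^(k^2)) := by ring
    rw [abs_le]
    constructor
    · linarith [rLo, t0, t1, t2, hC1]
    · linarith [rHi, t3, t4, hC2]
  | inr w =>
    obtain ⟨i₀, a⟩ := w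
    have ha : IsA' n k a := hv
    have e1 : Nat.factorial (k+1) * degK n k (Sum.inr (i₀, a)) = (FF n k a).card := by
      rw [← deg_eq hk _, DD_inr i₀ ha]
    obtain ⟨hF1, hF2⟩ := FF_bounds hn a (by rw [ha.1]; omega)
    rw [ha.1] at hF1 hF2
    have hExp : k*(k+1) - (k-1) = k^2+1 := by omega
    rw [hExp] at hF1 hF2
    have hD'pos : 0 < (k+1).descFactorial (k-1) := by
      rcases Nat.eq_zero_or_pos ((k+1).descFactorial (k-1)) with h0 | h0
      · rw [Nat.descFactorial_eq_zero_iff_lt] at h0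
        omega
      · exact h0
    have hLow : (n-(k+1))^(k^2+1) ≤ 2 * degK n k (Sum.inr (i₀, a)) := by
      have h2 : (k+1).descFactorial (k-1) * (n-(k+1))^(k^2+1) ≤
          (k+1).descFactorial (k-1) * (2 * degK n k (Sum.inr (i₀, a))) := by
        calc (k+1).descFactorial (k-1) * (n-(k+1))^(k^2+1) ≤ (FF n k a).card := hF1
          _ = (k+1).descFactorial (k-1) * (2 * degK n k (Sum.inr (i₀, a))) := by
            rw [← e1, fac_desc_k1 hk]; ring
      exact Nat.le_of_mul_le_mul_left h2 hD'pos
    have hUp : 2 * degK n k (Sum.inr (i₀, a)) ≤ n^(k^2+1) := by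
      have h2 : (k+1).descFactorial (k-1) * (2 * degK n k (Sum.inr (i₀, a))) ≤
          (k+1).descFactorial (k-1) * n^(k^2+1) := by
        calc (k+1).descFactorial (k-1) * (2 * degK n k (Sum.inr (i₀, a)))
            = (FF n k a).card := by rw [← e1, fac_desc_k1 hk]; ring
          _ ≤ (k+1).descFactorial (k-1) * n^(k^2+1) := hF2
      exact Nat.le_of_mul_le_mul_left h2 hD'pos
    have hGap := pow_sub_bound n (k+1) (k^2)
    have r1 : ((n-(k+1):ℕ):ℝ)^(k^2+1) ≤ 2 * (degK n k (Sum.inr (i₀, a)) : ℝ) := by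
      exact_mod_cast hLow
    have r2 : 2 * (degK n k (Sum.inr (i₀, a)) : ℝ) ≤ (n:ℝ)^(k^2+1) := by
      exact_mod_cast hUp
    have r3 : (n:ℝ)^(k^2+1) ≤ ((n-(k+1):ℕ):ℝ)^(k^2+1) +
        (((k:ℝ)^2+1)*((k:ℝ)+1)) * (n:ℝ)^(k^2) := by exact_mod_cast hGap
    rw [abs_le]
    constructor
    · linarith [r1, r3, hB]
    · linarith [r2, hB]
end

section
/- In the auxiliary hypergraph H1 built from K^{(k)}_{n,…,n} (with k ≥ 2), there is a constant c depending only on k such that every pair of distinct vertices of H1 is contained in at most c·n^{k²} tiles of H1; in particular, Δ₂(H1) ≤ d^{1−ε} for d = n^{k²+1}/2, any ε ∈ (0, 1/(k²+2)), and sufficiently large n. -/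
open Finset

/-- The codegree of a pair of vertices `u, v` of `H₁`: the number of tiles of `H₁`
containing both `u` and `v`. -/
noncomputable def codegK (n k : ℕ) (u v : VHK n k) : ℕ :=
  {T : Finset (VHK n k) | IsTileK n k T ∧ u ∈ T ∧ v ∈ T}.ncard



open scoped Classical

section Aux
variable {n k : ℕ}

-- counting lemma

lemma count_f_le (n k : ℕ) (hn : 1 ≤ n) (W : Finset (Fin k × Fin n)) :
    (univ.filter (fun f : Fin k → Fin (k+1) → Fin n =>
      ∀ x ∈ W, ∃ ℓ, f x.1 ℓ = x.2)).card ≤ (k+1) ^ W.card * n ^ (k*(k+1) - W.card) := by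
  classical
  set F := univ.filter (fun f : Fin k → Fin (k+1) → Fin n =>
      ∀ x ∈ W, ∃ ℓ, f x.1 ℓ = x.2) with hF
  have hsub : F ⊆ (univ : Finset ({x // x ∈ W} → Fin (k+1))).biUnion
      (fun h => univ.filter (fun f : Fin k → Fin (k+1) → Fin n =>
        ∀ x : {x // x ∈ W}, f x.1.1 (h x) = x.1.2)) := by
    intro f hf
    rw [hF, mem_filter] at hf
    have hf' := hf.2
    refine mem_biUnion.2 ⟨fun x => Classical.choose (hf' x.1 x.2), mem_univ _, ?_⟩
    rw [mem_filter]
    exact ⟨mem_univ _, fun x => Classical.choose_spec (hf' x.1 x.2)⟩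
  have hinner : ∀ h : {x // x ∈ W} → Fin (k+1),
      (univ.filter (fun f : Fin k → Fin (k+1) → Fin n =>
        ∀ x : {x // x ∈ W}, f x.1.1 (h x) = x.1.2)).card ≤ n ^ (k*(k+1) - W.card) := by
    intro h
    set G := univ.filter (fun f : Fin k → Fin (k+1) → Fin n =>
        ∀ x : {x // x ∈ W}, f x.1.1 (h x) = x.1.2) with hG
    rcases G.eq_empty_or_nonempty with he | ⟨f₀, hf₀⟩
    · simp [he]
    · have hf₀' : ∀ x : {x // x ∈ W}, f₀ x.1.1 (h x) = x.1.2 := by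
        rw [hG, mem_filter] at hf₀; exact hf₀.2
      set φ : {x // x ∈ W} → Fin k × Fin (k+1) := fun x => (x.1.1, h x) with hφ
      have hφinj : Function.Injective φ := by
        intro x y hxy
        simp only [hφ, Prod.mk.injEq] at hxy
        obtain ⟨h1, h2⟩ := hxy
        have h3 : x.1.2 = y.1.2 := by
          rw [← hf₀' x, ← hf₀' y, h1, h2]
        exact Subtype.ext (Prod.ext h1 h3)
      set D : Finset (Fin k × Fin (k+1)) := univ.image φ with hD
      have hDcard : D.card = W.card := by
        rw [hD, card_image_of_injective _ hφinj, card_univ, Fintype.card_coe]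
      have hcard : G.card ≤ Fintype.card ({p // p ∈ Dᶜ} → Fin n) := by
        rw [← card_univ]
        apply card_le_card_of_injOn (fun f (p : {p // p ∈ Dᶜ}) => f p.1.1 p.1.2)
          (fun _ _ => mem_univ _)
        intro f hf g hg hfg
        simp only [hG, mem_coe, mem_filter] at hf hg
        funext p q
        by_cases hpq : (p, q) ∈ D
        · rw [hD, mem_image] at hpq
          obtain ⟨x, -, hx⟩ := hpq
          simp only [hφ, Prod.mk.injEq] at hx
          obtain ⟨h1, h2⟩ := hx
          rw [← h1, ← h2, hf.2 x, hg.2 x]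
        · have : (p, q) ∈ Dᶜ := mem_compl.2 hpq
          exact congrFun hfg ⟨(p, q), this⟩
      calc G.card ≤ Fintype.card ({p // p ∈ Dᶜ} → Fin n) := hcard
        _ = n ^ (Dᶜ.card) := by
            rw [Fintype.card_fun, Fintype.card_fin, Fintype.card_coe]
        _ = n ^ (k*(k+1) - W.card) := by
            rw [card_compl, hDcard, Fintype.card_prod, Fintype.card_fin, Fintype.card_fin]
        _ ≤ n ^ (k*(k+1) - W.card) := le_refl _
  calc F.card ≤ ∑ h : {x // x ∈ W} → Fin (k+1),
        (univ.filter (fun f : Fin k → Fin (k+1) → Fin n =>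
          ∀ x : {x // x ∈ W}, f x.1.1 (h x) = x.1.2)).card :=
        le_trans (card_le_card hsub) (card_biUnion_le)
    _ ≤ ∑ _h : {x // x ∈ W} → Fin (k+1), n ^ (k*(k+1) - W.card) :=
        Finset.sum_le_sum (fun h _ => hinner h)
    _ = (k+1) ^ W.card * n ^ (k*(k+1) - W.card) := by
        rw [Finset.sum_const, card_univ, Fintype.card_fun, Fintype.card_fin,
          Fintype.card_coe, smul_eq_mul]

lemma card_union_gt {α : Type*} [DecidableEq α] {a b : Finset α} (hab : a ≠ b)
    (hc : a.card = b.card) : a.card < (a ∪ b).card := by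
  rcases lt_or_eq_of_le (card_le_card (subset_union_left : a ⊆ a ∪ b)) with h | h
  · exact h
  · exfalso
    apply hab
    have h1 : a = a ∪ b := eq_of_subset_of_card_le subset_union_left h.ge
    have h2 : b ⊆ a := h1 ▸ subset_union_right
    exact (eq_of_subset_of_card_le h2 hc.le).symm

/-- The underlying vertex set of a vertex of `H₁`. -/
def vertsK (w : VHK n k) : Finset (HVtx n k) := Sum.elim id Prod.snd w

/-- Color compatibility. -/
def colOKK (w : VHK n k) (i : ColK n) : Prop := ∀ j a, w = Sum.inr (j, a) → i = j

lemma mem_tile_trans {i : ColK n} {f : Fin k → Fin (k+1) → Fin n} {w : VHK n k}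
    (hw : w ∈ tileVertsK n k i f) : IsTransOf n k f (vertsK w) ∧ colOKK w i := by
  rcases hw with ⟨a, -, hta, rfl⟩ | ⟨a, -, hta, rfl⟩
  · exact ⟨hta, fun j b h => by simp at h⟩
  · exact ⟨hta, fun j b h => congrArg Prod.fst (Sum.inr.inj h)⟩

lemma codeg_le (u v : VHK n k) :
    codegK n k u v ≤
      (univ.filter (fun i : ColK n => colOKK u i ∧ colOKK v i)).card *
      (univ.filter (fun f : Fin k → Fin (k+1) → Fin n =>
        ∀ x ∈ vertsK u ∪ vertsK v, ∃ ℓ, f x.1 ℓ = x.2)).card := by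
  classical
  set Cs := univ.filter (fun i : ColK n => colOKK u i ∧ colOKK v i) with hCs
  set Fs := univ.filter (fun f : Fin k → Fin (k+1) → Fin n =>
        ∀ x ∈ vertsK u ∪ vertsK v, ∃ ℓ, f x.1 ℓ = x.2) with hFs
  set Φ : ColK n × (Fin k → Fin (k+1) → Fin n) → Finset (VHK n k) :=
    fun p => univ.filter (fun w => w ∈ tileVertsK n k p.1 p.2) with hΦ
  have hsub : {T : Finset (VHK n k) | IsTileK n k T ∧ u ∈ T ∧ v ∈ T}
      ⊆ ↑((Cs ×ˢ Fs).image Φ) := by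
    intro T hT
    obtain ⟨⟨i, f, -, hTf⟩, hu, hv⟩ := hT
    have hu' : u ∈ tileVertsK n k i f := hTf ▸ hu
    have hv' : v ∈ tileVertsK n k i f := hTf ▸ hv
    obtain ⟨⟨gu, hgu, -⟩, hcu⟩ := mem_tile_trans hu'
    obtain ⟨⟨gv, hgv, -⟩, hcv⟩ := mem_tile_trans hv'
    simp only [mem_coe, mem_image]
    refine ⟨(i, f), ?_, ?_⟩
    · rw [mem_product]
      constructor
      · rw [hCs, mem_filter]; exact ⟨mem_univ _, hcu, hcv⟩
      · rw [hFs, mem_filter]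
        refine ⟨mem_univ _, fun x hx => ?_⟩
        rcases mem_union.1 hx with h | h
        · exact ⟨gu x, (hgu x h).symm⟩
        · exact ⟨gv x, (hgv x h).symm⟩
    · rw [hΦ]
      ext w
      simp only [mem_filter, mem_univ, true_and]
      constructor
      · intro hw; rw [← mem_coe, hTf]; exact hw
      · intro hw; rw [← hTf]; exact hw
  calc codegK n k u v ≤ ((Cs ×ˢ Fs).image Φ).card := by
        rw [codegK, ← Set.ncard_coe_finset]
        exact Set.ncard_le_ncard hsub (Finset.finite_toSet _)
    _ ≤ (Cs ×ˢ Fs).card := card_image_le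
    _ = Cs.card * Fs.card := card_product _ _

lemma numB_bound (n k m c : ℕ) (hn : 1 ≤ n) (hc : c ≤ 1) (hm1 : k ≤ m) (hm2 : m ≤ 2*k) :
    c * ((k+1)^m * n^(k*(k+1) - m)) ≤ (k+1)^(2*k) * n^(k^2) := by
  have hkk : k^2 = k*k := sq k
  have hkk2 : k*(k+1) = k*k + k := by ring
  have e1 : (k+1)^m ≤ (k+1)^(2*k) := Nat.pow_le_pow_right (Nat.le_add_left 1 k) hm2
  have e2 : n^(k*(k+1) - m) ≤ n^(k^2) := Nat.pow_le_pow_right hn (by omega)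
  calc c * ((k+1)^m * n^(k*(k+1) - m)) ≤ 1 * ((k+1)^(2*k) * n^(k^2)) :=
        Nat.mul_le_mul hc (Nat.mul_le_mul e1 e2)
    _ = (k+1)^(2*k) * n^(k^2) := one_mul _

lemma numA_bound (n k m c : ℕ) (hk : 1 ≤ k) (hn : 1 ≤ n) (hc : c ≤ n) (hm1 : k+1 ≤ m)
    (hm2 : m ≤ 2*k) :
    c * ((k+1)^m * n^(k*(k+1) - m)) ≤ (k+1)^(2*k) * n^(k^2) := by
  have hkk : k^2 = k*k := sq k
  have hkk2 : k*(k+1) = k*k + k := by ring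
  have h1 : 1 ≤ k^2 := Nat.one_le_pow _ _ hk
  have e1 : (k+1)^m ≤ (k+1)^(2*k) := Nat.pow_le_pow_right (Nat.le_add_left 1 k) hm2
  have e2 : n^(k*(k+1) - m) ≤ n^(k^2 - 1) := Nat.pow_le_pow_right hn (by omega)
  calc c * ((k+1)^m * n^(k*(k+1) - m)) ≤ n * ((k+1)^(2*k) * n^(k^2 - 1)) :=
        Nat.mul_le_mul hc (Nat.mul_le_mul e1 e2)
    _ = (k+1)^(2*k) * (n * n^(k^2 - 1)) := by ring
    _ = (k+1)^(2*k) * n^(k^2) := by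
        congr 1
        rw [← pow_succ']
        congr 1
        omega

lemma codeg_le' (hn : 1 ≤ n) (u v : VHK n k) (cb : ℕ)
    (hC : (univ.filter (fun i : ColK n => colOKK u i ∧ colOKK v i)).card ≤ cb) :
    codegK n k u v ≤ cb * ((k+1)^((vertsK u ∪ vertsK v).card) *
      n^(k*(k+1) - (vertsK u ∪ vertsK v).card)) := by
  classical
  exact le_trans (codeg_le u v)
    (Nat.mul_le_mul hC (count_f_le n k hn (vertsK u ∪ vertsK v)))

lemma Cs_le_half (u v : VHK n k) (hn : 1 ≤ n) :
    (univ.filter (fun i : ColK n => colOKK u i ∧ colOKK v i)).card ≤ n := by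
  classical
  calc (univ.filter (fun i : ColK n => colOKK u i ∧ colOKK v i)).card
      ≤ (univ : Finset (ColK n)).card := card_filter_le _ _
    _ = (n+1)/2 := by rw [card_univ]; exact Fintype.card_fin _
    _ ≤ n := by omega

lemma Cs_le_one (u v : VHK n k) (j : ColK n) (b : Finset (HVtx n k))
    (h : u = Sum.inr (j, b) ∨ v = Sum.inr (j, b)) :
    (univ.filter (fun i : ColK n => colOKK u i ∧ colOKK v i)).card ≤ 1 := by
  classical
  have hsub : (univ.filter (fun i : ColK n => colOKK u i ∧ colOKK v i)) ⊆ {j} := by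
    intro i hi
    rw [mem_filter] at hi
    rcases h with h | h
    · exact mem_singleton.2 (hi.2.1 j b h)
    · exact mem_singleton.2 (hi.2.2 j b h)
  calc _ ≤ ({j} : Finset (ColK n)).card := card_le_card hsub
    _ = 1 := card_singleton _

lemma main_nat (k n : ℕ) (hk : 2 ≤ k) (hn : 1 ≤ n) (u v : VHK n k)
    (hu : IsVertexK n k u) (hv : IsVertexK n k v) (huv : u ≠ v) :
    codegK n k u v ≤ (k+1)^(2*k) * n^(k^2) := by
  classical
  obtain (a | ⟨j, a⟩) := u <;> obtain (b | ⟨j', b⟩) := v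
  · -- both in A
    have ha : a.card = k := hu.1
    have hb : b.card = k := hv.1
    have hab : a ≠ b := fun h => huv (by rw [h])
    have hc := card_union_gt hab (ha.trans hb.symm)
    have hab2 := card_union_le a b
    refine le_trans (codeg_le' hn _ _ n (Cs_le_half _ _ hn)) ?_
    exact numA_bound n k ((a ∪ b).card) n (by omega) hn le_rfl (by omega) (by omega)
  · -- A, B
    have ha : a.card = k := hu.1
    have hb : b.card = k - 1 := hv.1
    have hc := card_le_card (subset_union_left : a ⊆ a ∪ b)
    have hab2 := card_union_le a b
    refine le_trans (codeg_le' hn _ _ 1 (Cs_le_one _ _ j' b (Or.inr rfl))) ?_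
    exact numB_bound n k ((a ∪ b).card) 1 hn le_rfl (by omega) (by omega)
  · -- B, A
    have ha : a.card = k - 1 := hu.1
    have hb : b.card = k := hv.1
    have hc := card_le_card (subset_union_right : b ⊆ a ∪ b)
    have hab2 := card_union_le a b
    refine le_trans (codeg_le' hn _ _ 1 (Cs_le_one _ _ j a (Or.inl rfl))) ?_
    exact numB_bound n k ((a ∪ b).card) 1 hn le_rfl (by omega) (by omega)
  · -- both in B
    have ha : a.card = k - 1 := hu.1
    have hb : b.card = k - 1 := hv.1
    have hab2 := card_union_le a b
    by_cases hjj : j = j'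
    · have hab : a ≠ b := fun h => huv (by rw [h, hjj])
      have hc := card_union_gt hab (ha.trans hb.symm)
      refine le_trans (codeg_le' hn _ _ 1 (Cs_le_one _ _ j a (Or.inl rfl))) ?_
      exact numB_bound n k ((a ∪ b).card) 1 hn le_rfl (by omega) (by omega)
    · have hC0 : (univ.filter (fun i : ColK n =>
          colOKK (Sum.inr (j, a) : VHK n k) i ∧ colOKK (Sum.inr (j', b) : VHK n k) i)).card
            ≤ 0 := by
        rw [Nat.le_zero, card_eq_zero, filter_eq_empty_iff]
        intro i _
        rintro ⟨h1, h2⟩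
        exact hjj ((h1 j a rfl).symm.trans (h2 j' b rfl))
      refine le_trans (codeg_le' hn _ _ 0 hC0) ?_
      simp

end Aux

/-- In the auxiliary hypergraph `H₁` built from `K^{(k)}_{n,…,n}` (with `k ≥ 2`), there
is a constant `c` depending only on `k` such that every pair of distinct vertices of `H₁`
lies in at most `c·n^{k²}` tiles; in particular `Δ₂(H₁) ≤ d^{1−ε}` for `d = n^{k²+1}/2`,
any `ε ∈ (0, 1/(k²+2))` and sufficiently large `n`. -/
theorem stmt17 (k : ℕ) (hk : 2 ≤ k) :
    (∃ c : ℝ, 0 < c ∧ ∀ n : ℕ, 1 ≤ n → ∀ u v : VHK n k,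
      IsVertexK n k u → IsVertexK n k v → u ≠ v →
        (codegK n k u v : ℝ) ≤ c * (n : ℝ) ^ (k ^ 2)) ∧
    ∀ ε : ℝ, 0 < ε → ε < 1 / (k ^ 2 + 2) → ∃ n₀ : ℕ, ∀ n : ℕ, n₀ ≤ n →
      ∀ u v : VHK n k, IsVertexK n k u → IsVertexK n k v → u ≠ v →
        (codegK n k u v : ℝ) ≤ ((n : ℝ) ^ (k ^ 2 + 1) / 2) ^ ((1 : ℝ) - ε) := by
  constructor
  · refine ⟨(((k+1)^(2*k) : ℕ) : ℝ), by exact_mod_cast pow_pos (Nat.succ_pos k) (2*k), ?_⟩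
    intro n hn u v hu hv huv
    have h := main_nat k n hk hn u v hu hv huv
    calc (codegK n k u v : ℝ) ≤ (((k+1)^(2*k) * n^(k^2) : ℕ) : ℝ) := by exact_mod_cast h
      _ = (((k+1)^(2*k) : ℕ) : ℝ) * (n:ℝ)^(k^2) := by push_cast; ring
  · intro ε hε hε'
    set c : ℝ := (((k+1)^(2*k) : ℕ) : ℝ) with hc
    have hc0 : 0 < c := by
      rw [hc]; exact_mod_cast pow_pos (Nat.succ_pos k) (2*k)
    have hk2 : (0:ℝ) < (k:ℝ)^2 + 2 := by positivity
    have hεk : ε * ((k:ℝ)^2 + 2) < 1 := (lt_div_iff₀ hk2).mp hε'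
    set δ : ℝ := ((k:ℝ)^2 + 1) * (1 - ε) - (k:ℝ)^2 with hδdef
    have hδ : 0 < δ := by
      have hδ' : δ = 1 - ε * ((k:ℝ)^2 + 1) := by rw [hδdef]; ring
      rw [hδ']
      nlinarith [hε, hεk]
    have h2c : (0:ℝ) < 2*c := by positivity
    obtain ⟨n₀, hn₀⟩ := exists_nat_ge ((2*c)^(1/δ : ℝ))
    refine ⟨max n₀ 1, ?_⟩
    intro n hn u v hu hv huv
    have hn1 : 1 ≤ n := le_trans (le_max_right _ _) hn
    have hx1 : (1:ℝ) ≤ (n:ℝ) := by exact_mod_cast hn1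
    have hx0 : (0:ℝ) < (n:ℝ) := lt_of_lt_of_le one_pos hx1
    have h1 : (codegK n k u v : ℝ) ≤ c * (n:ℝ)^(k^2) := by
      have h := main_nat k n hk hn1 u v hu hv huv
      calc (codegK n k u v : ℝ) ≤ (((k+1)^(2*k) * n^(k^2) : ℕ) : ℝ) := by exact_mod_cast h
        _ = c * (n:ℝ)^(k^2) := by rw [hc]; push_cast; ring
    have hnn₀ : ((2*c)^(1/δ : ℝ)) ≤ (n:ℝ) := by
      refine le_trans hn₀ ?_
      exact_mod_cast le_trans (le_max_left _ _) hn
    have h2 : 2*c ≤ (n:ℝ) ^ δ := by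
      have h := Real.rpow_le_rpow (Real.rpow_nonneg h2c.le _) hnn₀ hδ.le
      rwa [← Real.rpow_mul h2c.le, one_div_mul_cancel hδ.ne', Real.rpow_one] at h
    have h3 : c * (n:ℝ)^(k^2) ≤ (n:ℝ)^(((k:ℝ)^2+1)*(1-ε)) / 2 := by
      have hcd : c ≤ (n:ℝ)^δ / 2 := by linarith
      calc c * (n:ℝ)^(k^2) ≤ ((n:ℝ)^δ / 2) * (n:ℝ)^(k^2) :=
            mul_le_mul_of_nonneg_right hcd (by positivity)
        _ = (n:ℝ)^δ * (n:ℝ)^(((k^2 : ℕ)) : ℝ) / 2 := by rw [Real.rpow_natCast]; ring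
        _ = (n:ℝ)^(δ + ((k^2:ℕ):ℝ)) / 2 := by rw [← Real.rpow_add hx0]
        _ = (n:ℝ)^(((k:ℝ)^2+1)*(1-ε)) / 2 := by
            congr 1
            push_cast
            rw [hδdef]; ring
    have h4 : (n:ℝ)^(((k:ℝ)^2+1)*(1-ε)) / 2 ≤ ((n:ℝ)^(k^2+1)/2)^((1:ℝ)-ε) := by
      have hpow : ((n:ℝ)^(k^2+1)/2)^((1:ℝ)-ε)
          = (n:ℝ)^(((k:ℝ)^2+1)*(1-ε)) / (2:ℝ)^((1:ℝ)-ε) := by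
        rw [Real.div_rpow (by positivity) (by norm_num)]
        congr 1
        rw [← Real.rpow_natCast (n:ℝ) (k^2+1), ← Real.rpow_mul hx0.le]
        congr 1
        push_cast
        ring
      rw [hpow]
      have h2e : (2:ℝ)^((1:ℝ)-ε) ≤ 2 := by
        calc (2:ℝ)^((1:ℝ)-ε) ≤ (2:ℝ)^(1:ℝ) :=
              Real.rpow_le_rpow_of_exponent_le one_le_two (by linarith)
          _ = 2 := Real.rpow_one 2
      have h2e0 : (0:ℝ) < (2:ℝ)^((1:ℝ)-ε) := Real.rpow_pos_of_pos two_pos _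
      have hA : (0:ℝ) ≤ (n:ℝ)^(((k:ℝ)^2+1)*(1-ε)) := Real.rpow_nonneg hx0.le _
      exact div_le_div_of_nonneg_left hA h2e0 h2e
    linarith
end

section
/- In the auxiliary hypergraph H1 built from K^{(k)}_{n,…,n} (with k ≥ 2), with d = n^{k²+1}/2 there is a constant c depending only on k such that every tile of H1 is contained in at most c·d² conflicts of 𝒞 of size 3 and in at most c·d³ conflicts of 𝒞 of size 4; that is, Δ(𝒞^{(3)}) = O(d²) and Δ(𝒞^{(4)}) = O(d³). -/
open Finset

/-- The edge of `K^{(k)}_{n,…,n}` choosing vertex `e p` in each part `p`, as a vertex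
set. -/
def edgeOf (n k : ℕ) (e : Fin k → Fin n) : Finset (HVtx n k) :=
  Finset.univ.image fun p => (p, e p)

/-- The conflict system `𝒞` for `H₁`: `C ∈ 𝒞` iff `C` is a matching of three or four
distinct tiles `{e_{S,i}, e_{S',i}, e_{T,j}, e_{T',j}}` with distinct colors `i ≠ j`, for
which there are two distinct parts `p ≠ q`, a base edge `e`, and alternative vertices
`a ≠ e p` in part `p` and `b ≠ e q` in part `q`, such that the four edges of the
corresponding copy of `K_{1,…,1,2,2}` belong (as vertices of `H₁`) to the four tiles as
indicated; such a set corresponds to a copy of `K_{1,…,1,2,2}` with no odd color class. -/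
def IsConflictK (n k : ℕ) (C : Finset (Finset (VHK n k))) : Prop :=
  (C.card = 3 ∨ C.card = 4) ∧
  (∀ T ∈ C, ∀ T' ∈ C, T ≠ T' → Disjoint T T') ∧
  ∃ i j : ColK n, i ≠ j ∧ ∃ T₁ T₂ T₃ T₄ : Finset (VHK n k),
    IsTileColK n k i T₁ ∧ IsTileColK n k i T₂ ∧
    IsTileColK n k j T₃ ∧ IsTileColK n k j T₄ ∧
    C = {T₁, T₂, T₃, T₄} ∧
    ∃ p q : Fin k, p ≠ q ∧ ∃ (e : Fin k → Fin n) (a b : Fin n), e p ≠ a ∧ e q ≠ b ∧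
      Sum.inl (edgeOf n k e) ∈ T₁ ∧
      Sum.inl (edgeOf n k (Function.update (Function.update e p a) q b)) ∈ T₂ ∧
      Sum.inl (edgeOf n k (Function.update e p a)) ∈ T₃ ∧
      Sum.inl (edgeOf n k (Function.update e q b)) ∈ T₄

section Helpers

variable {n k : ℕ}

/-- The tile, as a finset, determined by a color and a copy `f`. -/
noncomputable def tileFinset (n k : ℕ) (i : ColK n) (f : Fin k → Fin (k + 1) → Fin n) :
    Finset (VHK n k) :=
  (Set.toFinite (tileVertsK n k i f)).toFinset

lemma coe_tileFinset (i : ColK n) (f : Fin k → Fin (k + 1) → Fin n) :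
    (tileFinset n k i f : Set (VHK n k)) = tileVertsK n k i f :=
  Set.Finite.coe_toFinset _

lemma eq_tileFinset {T : Finset (VHK n k)} {i : ColK n} {f : Fin k → Fin (k + 1) → Fin n}
    (h : (T : Set (VHK n k)) = tileVertsK n k i f) : T = tileFinset n k i f :=
  Finset.coe_injective (h.trans (coe_tileFinset i f).symm)

/-- If a tile contains an edge, the edge picks a slot in each part. -/
lemma exists_slot {i : ColK n} {f : Fin k → Fin (k + 1) → Fin n} {w : Fin k → Fin n}
    (h : Sum.inl (edgeOf n k w) ∈ tileVertsK n k i f) :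
    ∃ σ : Fin k → Fin (k + 1), ∀ p, f p (σ p) = w p := by
  rcases h with ⟨a, -, ⟨g, hg, -⟩, ha⟩ | ⟨a, -, -, ha⟩
  · obtain rfl : edgeOf n k w = a := by
      simpa using ha
    refine ⟨fun p => g (p, w p), fun p => ?_⟩
    have hm : ((p, w p) : HVtx n k) ∈ edgeOf n k w := by
      simp [edgeOf]
    exact (hg _ hm).symm
  · simp at ha

/-- Reconstruction of a copy from one of its edges plus bounded data. -/
lemma exists_recon {i : ColK n} {f : Fin k → Fin (k + 1) → Fin n} {w : Fin k → Fin n}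
    (h : Sum.inl (edgeOf n k w) ∈ tileVertsK n k i f) :
    ∃ (σ : Fin k → Fin (k + 1)) (hh : Fin k → Fin k → Fin n),
      f = fun p => Fin.insertNth (σ p) (w p) (hh p) := by
  obtain ⟨σ, hσ⟩ := exists_slot h
  refine ⟨σ, fun p => (σ p).removeNth (f p), funext fun p => ?_⟩
  rw [← hσ p]
  exact (Fin.insertNth_self_removeNth ..).symm

lemma exists_inr_mem (hk : 2 ≤ k) (i : ColK n) (f : Fin k → Fin (k + 1) → Fin n) :
    ∃ a, Sum.inr (i, a) ∈ tileVertsK n k i f := by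
  have hk0 : 0 < k := by omega
  set p₀ : Fin k := ⟨0, hk0⟩
  set a : Finset (HVtx n k) :=
    (Finset.univ.erase p₀).image (fun p => (p, f p p.castSucc)) with ha
  have hmem : ∀ x ∈ a, x = (x.1, f x.1 x.1.castSucc) := by
    intro x hx
    simp only [ha, Finset.mem_image, Finset.mem_erase] at hx
    obtain ⟨p, -, rfl⟩ := hx
    rfl
  refine ⟨a, Or.inr ⟨a, ⟨?_, ?_⟩, ⟨fun x => x.1.castSucc, ?_, ?_⟩, rfl⟩⟩
  · rw [ha, Finset.card_image_of_injective _ (fun p q h => (Prod.mk.injEq ..).mp h |>.1)]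
    simp
  · intro x hx y hy hxy
    rw [hmem x hx, hmem y hy, hxy]
  · intro x hx
    exact congrArg Prod.snd (hmem x hx)
  · intro x hx y hy hxy
    rw [hmem x hx, hmem y hy]
    have : x.1 = y.1 := Fin.castSucc_injective _ hxy
    rw [this]

lemma color_unique (hk : 2 ≤ k) {i i' : ColK n} {f f' : Fin k → Fin (k + 1) → Fin n}
    (h : tileVertsK n k i f = tileVertsK n k i' f') : i = i' := by
  obtain ⟨a, ha⟩ := exists_inr_mem hk i f
  rw [h] at ha
  rcases ha with ⟨b, -, -, hb⟩ | ⟨b, -, -, hb⟩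
  · simp at hb
  · obtain ⟨h1, -⟩ := Prod.mk.injEq .. ▸ (Sum.inr.injEq .. ▸ hb)
    exact h1

end Helpers
section Phi

variable {n k : ℕ}

lemma mem_tileVerts_of_mem {T : Finset (VHK n k)} {i : ColK n}
    {f : Fin k → Fin (k + 1) → Fin n} (hT : (T : Set (VHK n k)) = tileVertsK n k i f)
    {v : VHK n k} (hv : v ∈ T) : v ∈ tileVertsK n k i f :=
  hT ▸ (Finset.mem_coe.2 hv)

/-- Bounded parametrization of a copy containing a given edge. -/
abbrev TPK (n k : ℕ) := (Fin k → Fin (k + 1)) × (Fin k → Fin k → Fin n)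

def reconF (n k : ℕ) (w : Fin k → Fin n) (t : TPK n k) : Fin k → Fin (k + 1) → Fin n :=
  fun p => Fin.insertNth (t.1 p) (w p) (t.2 p)

lemma exists_recon' {i : ColK n} {f : Fin k → Fin (k + 1) → Fin n} {w : Fin k → Fin n}
    (h : Sum.inl (edgeOf n k w) ∈ tileVertsK n k i f) :
    ∃ t : TPK n k, f = reconF n k w t := by
  obtain ⟨σ, hh, hf⟩ := exists_recon h
  exact ⟨(σ, hh), hf⟩

/-- Parameter space for size-3 conflicts. -/
abbrev A3P (n k : ℕ) := (Fin k → Fin (k + 1)) × (Fin k → Fin (k + 1)) × Fin k × Fin k ×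
  Fin n × ColK n × Fin (k + 1) × TPK n k × TPK n k

noncomputable def phi30 (n k : ℕ) (T : Finset (VHK n k)) (_i₀ : ColK n)
    (f₀ : Fin k → Fin (k + 1) → Fin n) : A3P n k → Finset (Finset (VHK n k))
  | (g, g', p, q, _, j', _, tpA, tpB) =>
    {T, tileFinset n k j' (reconF n k
        (Function.update (fun s => f₀ s (g s)) p (f₀ p (g' p))) tpA),
        tileFinset n k j' (reconF n k
        (Function.update (fun s => f₀ s (g s)) q (f₀ q (g' q))) tpB)}

noncomputable def phi31 (n k : ℕ) (T : Finset (VHK n k)) (i₀ : ColK n)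
    (f₀ : Fin k → Fin (k + 1) → Fin n) : A3P n k → Finset (Finset (VHK n k))
  | (g, _, p, q, u, j', τ, tpA, tpB) =>
    {tileFinset n k j' (reconF n k (Function.update (fun s => f₀ s (g s)) p u) tpA), T,
     tileFinset n k i₀ (reconF n k
       (Function.update (Function.update (fun s => f₀ s (g s)) p u) q
         (reconF n k (Function.update (fun s => f₀ s (g s)) p u) tpA q τ)) tpB)}

noncomputable def phi32 (n k : ℕ) (T : Finset (VHK n k)) (i₀ : ColK n)
    (f₀ : Fin k → Fin (k + 1) → Fin n) : A3P n k → Finset (Finset (VHK n k))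
  | (g, _, p, q, u, j', τ, tpA, tpB) =>
    {tileFinset n k j' (reconF n k (Function.update (fun s => f₀ s (g s)) q u) tpA),
     tileFinset n k i₀ (reconF n k
       (Function.update (Function.update (fun s => f₀ s (g s)) q u) p
         (reconF n k (Function.update (fun s => f₀ s (g s)) q u) tpA p τ)) tpB), T}

lemma cover3_core (hk : 2 ≤ k) {T U V₁ V₂ : Finset (VHK n k)}
    {i₀ cU cV : ColK n} {f₀ : Fin k → Fin (k + 1) → Fin n}
    (hT : (T : Set (VHK n k)) = tileVertsK n k i₀ f₀)
    (p q : Fin k) (w w' : Fin k → Fin n)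
    (tU : IsTileColK n k cU U) (tV1 : IsTileColK n k cV V₁) (tV2 : IsTileColK n k cV V₂)
    (hUw : Sum.inl (edgeOf n k w) ∈ U) (hUw' : Sum.inl (edgeOf n k w') ∈ U)
    (hV1 : Sum.inl (edgeOf n k (Function.update w p (w' p))) ∈ V₁)
    (hV2 : Sum.inl (edgeOf n k (Function.update w q (w' q))) ∈ V₂)
    (hTmem : T = U ∨ T = V₁ ∨ T = V₂) :
    (∃ P : A3P n k, phi30 n k T i₀ f₀ P = {U, V₁, V₂}) ∨
    (∃ P : A3P n k, phi31 n k T i₀ f₀ P = {U, V₁, V₂}) ∨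
    (∃ P : A3P n k, phi32 n k T i₀ f₀ P = {U, V₁, V₂}) := by
  obtain ⟨f1, -, hf1⟩ := tV1
  obtain ⟨f2, -, hf2⟩ := tV2
  obtain ⟨fU, -, hfU⟩ := tU
  rcases hTmem with rfl | rfl | rfl
  · -- T = U : use phi30
    obtain ⟨g, hg⟩ := exists_slot (mem_tileVerts_of_mem hT hUw)
    obtain ⟨g', hg'⟩ := exists_slot (mem_tileVerts_of_mem hT hUw')
    obtain ⟨tpA, htpA⟩ := exists_recon' (mem_tileVerts_of_mem hf1 hV1)
    obtain ⟨tpB, htpB⟩ := exists_recon' (mem_tileVerts_of_mem hf2 hV2)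
    left
    refine ⟨(g, g', p, q, w p, cV, 0, tpA, tpB), ?_⟩
    have hw : (fun s => f₀ s (g s)) = w := funext hg
    simp only [phi30]
    rw [hw, hg' p, hg' q, ← htpA, ← htpB, ← eq_tileFinset hf1, ← eq_tileFinset hf2]
  · -- T = V₁ : use phi31
    have hcol : i₀ = cV := color_unique hk (hT.symm.trans hf1)
    obtain ⟨g, hg⟩ := exists_slot (mem_tileVerts_of_mem hT hV1)
    have hx : (fun s => f₀ s (g s)) = Function.update w p (w' p) := funext hg
    obtain ⟨tpA, htpA⟩ := exists_recon' (mem_tileVerts_of_mem hfU hUw)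
    obtain ⟨σ', hσ'⟩ := exists_slot (mem_tileVerts_of_mem hfU hUw')
    obtain ⟨tpB, htpB⟩ := exists_recon' (mem_tileVerts_of_mem hf2 hV2)
    right; left
    refine ⟨(g, g, p, q, w p, cU, σ' q, tpA, tpB), ?_⟩
    simp only [phi31]
    have e1 : Function.update (fun s => f₀ s (g s)) p (w p) = w := by
      rw [hx, Function.update_idem, Function.update_eq_self]
    rw [e1, ← htpA, hσ' q, hcol, ← htpB, ← eq_tileFinset hfU, ← eq_tileFinset hf2]
  · -- T = V₂ : use phi32
    have hcol : i₀ = cV := color_unique hk (hT.symm.trans hf2)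
    obtain ⟨g, hg⟩ := exists_slot (mem_tileVerts_of_mem hT hV2)
    have hx : (fun s => f₀ s (g s)) = Function.update w q (w' q) := funext hg
    obtain ⟨tpA, htpA⟩ := exists_recon' (mem_tileVerts_of_mem hfU hUw)
    obtain ⟨σ', hσ'⟩ := exists_slot (mem_tileVerts_of_mem hfU hUw')
    obtain ⟨tpB, htpB⟩ := exists_recon' (mem_tileVerts_of_mem hf1 hV1)
    right; right
    refine ⟨(g, g, p, q, w q, cU, σ' p, tpA, tpB), ?_⟩
    simp only [phi32]
    have e1 : Function.update (fun s => f₀ s (g s)) q (w q) = w := by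
      rw [hx, Function.update_idem, Function.update_eq_self]
    rw [e1, ← htpA, hσ' p, hcol, ← htpB, ← eq_tileFinset hfU, ← eq_tileFinset hf1]

end Phi
section Cover3

variable {n k : ℕ}

lemma cover3 (hk : 2 ≤ k) {T : Finset (VHK n k)} {i₀ : ColK n}
    {f₀ : Fin k → Fin (k + 1) → Fin n}
    (hT : (T : Set (VHK n k)) = tileVertsK n k i₀ f₀)
    {C : Finset (Finset (VHK n k))}
    (hC : IsConflictK n k C) (h3 : C.card = 3) (hTC : T ∈ C) :
    (∃ P : A3P n k, phi30 n k T i₀ f₀ P = C) ∨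
    (∃ P : A3P n k, phi31 n k T i₀ f₀ P = C) ∨
    (∃ P : A3P n k, phi32 n k T i₀ f₀ P = C) := by
  obtain ⟨-, -, i, j, hij, T₁, T₂, T₃, T₄, t1, t2, t3, t4, hCeq, p, q, hpq, e, a, b,
    hea, heb, m1, m2, m3, m4⟩ := hC
  have cross : ∀ (X Y : Finset (VHK n k)), IsTileColK n k i X → IsTileColK n k j Y →
      X ≠ Y := by
    rintro X Y ⟨fx, -, hx⟩ ⟨fy, -, hy⟩ rfl
    exact hij (color_unique hk (hx.symm.trans hy))
  have hsplit : T₁ = T₂ ∨ T₃ = T₄ := by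
    by_contra hcon
    push_neg at hcon
    obtain ⟨h12, h34⟩ := hcon
    have c4 : ({T₁, T₂, T₃, T₄} : Finset (Finset (VHK n k))).card = 4 := by
      rw [Finset.card_insert_of_notMem
            (by simp [h12, cross T₁ T₃ t1 t3, cross T₁ T₄ t1 t4]),
          Finset.card_insert_of_notMem
            (by simp [cross T₂ T₃ t2 t3, cross T₂ T₄ t2 t4]),
          Finset.card_insert_of_notMem (by simp [h34]), Finset.card_singleton]
    rw [hCeq, c4] at h3
    omega
  have hTC' : T = T₁ ∨ T = T₂ ∨ T = T₃ ∨ T = T₄ := by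
    rw [hCeq] at hTC
    simpa using hTC
  rcases hsplit with h12 | h34
  · -- U = T₁ = T₂, V₁ = T₃, V₂ = T₄, w = e, w' = update (update e p a) q b
    set w' : Fin k → Fin n := Function.update (Function.update e p a) q b with hw'
    have hw'p : w' p = a := by
      rw [hw', Function.update_of_ne hpq, Function.update_self]
    have hw'q : w' q = b := by
      rw [hw', Function.update_self]
    have hV1 : Sum.inl (edgeOf n k (Function.update e p (w' p))) ∈ T₃ := by
      rw [hw'p]; exact m3
    have hV2 : Sum.inl (edgeOf n k (Function.update e q (w' q))) ∈ T₄ := by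
      rw [hw'q]; exact m4
    have hUw' : Sum.inl (edgeOf n k w') ∈ T₁ := by rw [h12]; exact m2
    have hCset : C = {T₁, T₃, T₄} := by
      rw [hCeq, ← h12, Finset.insert_idem]
    have hTmem : T = T₁ ∨ T = T₃ ∨ T = T₄ := by
      rcases hTC' with h | h | h | h
      exacts [Or.inl h, Or.inl (h.trans h12.symm), Or.inr (Or.inl h), Or.inr (Or.inr h)]
    have := cover3_core hk hT p q e w' t1 t3 t4 m1 hUw' hV1 hV2 hTmem
    rw [← hCset] at this
    exact this
  · -- U = T₃ = T₄, V₁ = T₁, V₂ = T₂, w = update e p a, w' = update e q b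
    set w : Fin k → Fin n := Function.update e p a with hw
    set w' : Fin k → Fin n := Function.update e q b with hw'
    have hw'p : w' p = e p := by rw [hw', Function.update_of_ne hpq]
    have hw'q : w' q = b := by rw [hw', Function.update_self]
    have hV1 : Sum.inl (edgeOf n k (Function.update w p (w' p))) ∈ T₁ := by
      rw [hw'p, hw, Function.update_idem, Function.update_eq_self]; exact m1
    have hV2 : Sum.inl (edgeOf n k (Function.update w q (w' q))) ∈ T₂ := by
      rw [hw'q, hw]; exact m2
    have hUw' : Sum.inl (edgeOf n k w') ∈ T₃ := by rw [h34]; exact m4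
    have hCset : C = {T₃, T₁, T₂} := by
      rw [hCeq, ← h34]
      ext X
      simp only [Finset.mem_insert, Finset.mem_singleton]
      tauto
    have hTmem : T = T₃ ∨ T = T₁ ∨ T = T₂ := by
      rcases hTC' with h | h | h | h
      exacts [Or.inr (Or.inl h), Or.inr (Or.inr h), Or.inl h, Or.inl (h.trans h34.symm)]
    have := cover3_core hk hT p q w w' t3 t1 t2 m3 hUw' hV1 hV2 hTmem
    rw [← hCset] at this
    exact this

end Cover3
section Cover4

variable {n k : ℕ}

/-- Parameter space for size-4 conflicts. -/
abbrev A4P (n k : ℕ) := (Fin k → Fin (k + 1)) × Fin k × Fin k × Fin n × Fin n ×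
  ColK n × TPK n k × TPK n k × TPK n k

noncomputable def phi40 (n k : ℕ) (T : Finset (VHK n k)) (i₀ : ColK n)
    (f₀ : Fin k → Fin (k + 1) → Fin n) : A4P n k → Finset (Finset (VHK n k))
  | (g, p, q, u, v, j', tp1, tp2, tp3) =>
    {T, tileFinset n k i₀ (reconF n k
        (Function.update (Function.update (fun s => f₀ s (g s)) p u) q v) tp1),
     tileFinset n k j' (reconF n k (Function.update (fun s => f₀ s (g s)) p u) tp2),
     tileFinset n k j' (reconF n k (Function.update (fun s => f₀ s (g s)) q v) tp3)}

noncomputable def phi41 (n k : ℕ) (T : Finset (VHK n k)) (i₀ : ColK n)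
    (f₀ : Fin k → Fin (k + 1) → Fin n) : A4P n k → Finset (Finset (VHK n k))
  | (g, p, q, u, v, j', tp1, tp2, tp3) =>
    {tileFinset n k i₀ (reconF n k
        (Function.update (Function.update (fun s => f₀ s (g s)) p u) q v) tp1), T,
     tileFinset n k j' (reconF n k
        (Function.update (Function.update (Function.update (fun s => f₀ s (g s)) p u) q v)
          p (f₀ p (g p))) tp2),
     tileFinset n k j' (reconF n k
        (Function.update (Function.update (Function.update (fun s => f₀ s (g s)) p u) q v)
          q (f₀ q (g q))) tp3)}

noncomputable def phi42 (n k : ℕ) (T : Finset (VHK n k)) (i₀ : ColK n)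
    (f₀ : Fin k → Fin (k + 1) → Fin n) : A4P n k → Finset (Finset (VHK n k))
  | (g, p, q, u, v, j', tp1, tp2, tp3) =>
    {tileFinset n k j' (reconF n k (Function.update (fun s => f₀ s (g s)) p u) tp1),
     tileFinset n k j' (reconF n k (Function.update (fun s => f₀ s (g s)) q v) tp2), T,
     tileFinset n k i₀ (reconF n k
        (Function.update (Function.update (fun s => f₀ s (g s)) p u) q v) tp3)}

noncomputable def phi43 (n k : ℕ) (T : Finset (VHK n k)) (i₀ : ColK n)
    (f₀ : Fin k → Fin (k + 1) → Fin n) : A4P n k → Finset (Finset (VHK n k))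
  | (g, p, q, u, v, j', tp1, tp2, tp3) =>
    {tileFinset n k j' (reconF n k (Function.update (fun s => f₀ s (g s)) q u) tp1),
     tileFinset n k j' (reconF n k
        (Function.update (Function.update (Function.update (fun s => f₀ s (g s)) q u) p v)
          q (f₀ q (g q))) tp2),
     tileFinset n k i₀ (reconF n k
        (Function.update (Function.update (fun s => f₀ s (g s)) q u) p v) tp3), T}

lemma cover4 (hk : 2 ≤ k) {T : Finset (VHK n k)} {i₀ : ColK n}
    {f₀ : Fin k → Fin (k + 1) → Fin n}
    (hT : (T : Set (VHK n k)) = tileVertsK n k i₀ f₀)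
    {C : Finset (Finset (VHK n k))}
    (hC : IsConflictK n k C) (hTC : T ∈ C) :
    (∃ P : A4P n k, phi40 n k T i₀ f₀ P = C) ∨
    (∃ P : A4P n k, phi41 n k T i₀ f₀ P = C) ∨
    (∃ P : A4P n k, phi42 n k T i₀ f₀ P = C) ∨
    (∃ P : A4P n k, phi43 n k T i₀ f₀ P = C) := by
  obtain ⟨-, -, i, j, hij, T₁, T₂, T₃, T₄, t1, t2, t3, t4, hCeq, p, q, hpq, e, a, b,
    hea, heb, m1, m2, m3, m4⟩ := hC
  obtain ⟨f1, -, hf1⟩ := t1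
  obtain ⟨f2, -, hf2⟩ := t2
  obtain ⟨f3, -, hf3⟩ := t3
  obtain ⟨f4, -, hf4⟩ := t4
  have hTC' : T = T₁ ∨ T = T₂ ∨ T = T₃ ∨ T = T₄ := by
    rw [hCeq] at hTC
    simpa using hTC
  rcases hTC' with rfl | rfl | rfl | rfl
  · -- T = T₁
    have hcol : i₀ = i := color_unique hk (hT.symm.trans hf1)
    obtain ⟨g, hg⟩ := exists_slot (mem_tileVerts_of_mem hT m1)
    have hw : (fun s => f₀ s (g s)) = e := funext hg
    obtain ⟨tp1, htp1⟩ := exists_recon' (mem_tileVerts_of_mem hf2 m2)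
    obtain ⟨tp2, htp2⟩ := exists_recon' (mem_tileVerts_of_mem hf3 m3)
    obtain ⟨tp3, htp3⟩ := exists_recon' (mem_tileVerts_of_mem hf4 m4)
    left
    refine ⟨(g, p, q, a, b, j, tp1, tp2, tp3), ?_⟩
    simp only [phi40]
    rw [hw, hcol, ← htp1, ← htp2, ← htp3, ← eq_tileFinset hf2, ← eq_tileFinset hf3,
      ← eq_tileFinset hf4, hCeq]
  · -- T = T₂
    have hcol : i₀ = i := color_unique hk (hT.symm.trans hf2)
    obtain ⟨g, hg⟩ := exists_slot (mem_tileVerts_of_mem hT m2)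
    have hw : (fun s => f₀ s (g s)) =
        Function.update (Function.update e p a) q b := funext hg
    have hgp : f₀ p (g p) = a := by
      rw [hg p, Function.update_of_ne hpq, Function.update_self]
    have hgq : f₀ q (g q) = b := by
      rw [hg q, Function.update_self]
    have hE : Function.update (Function.update (fun s => f₀ s (g s)) p (e p)) q (e q)
        = e := by
      rw [hw]
      funext s
      rcases eq_or_ne s q with rfl | h1
      · simp
      · rcases eq_or_ne s p with rfl | h2
        · simp [Function.update_of_ne h1]
        · simp [Function.update_of_ne h1, Function.update_of_ne h2]
    obtain ⟨tp1, htp1⟩ := exists_recon' (mem_tileVerts_of_mem hf1 m1)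
    obtain ⟨tp2, htp2⟩ := exists_recon' (mem_tileVerts_of_mem hf3 m3)
    obtain ⟨tp3, htp3⟩ := exists_recon' (mem_tileVerts_of_mem hf4 m4)
    right; left
    refine ⟨(g, p, q, e p, e q, j, tp1, tp2, tp3), ?_⟩
    simp only [phi41]
    rw [hE, hgp, hgq, hcol, ← htp1, ← htp2, ← htp3, ← eq_tileFinset hf1,
      ← eq_tileFinset hf3, ← eq_tileFinset hf4, hCeq]
  · -- T = T₃
    have hcol : i₀ = j := color_unique hk (hT.symm.trans hf3)
    obtain ⟨g, hg⟩ := exists_slot (mem_tileVerts_of_mem hT m3)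
    have hw : (fun s => f₀ s (g s)) = Function.update e p a := funext hg
    have hE : Function.update (fun s => f₀ s (g s)) p (e p) = e := by
      rw [hw, Function.update_idem, Function.update_eq_self]
    obtain ⟨tp1, htp1⟩ := exists_recon' (mem_tileVerts_of_mem hf1 m1)
    obtain ⟨tp2, htp2⟩ := exists_recon' (mem_tileVerts_of_mem hf2 m2)
    obtain ⟨tp3, htp3⟩ := exists_recon' (mem_tileVerts_of_mem hf4 m4)
    right; right; left
    refine ⟨(g, p, q, e p, b, i, tp1, tp2, tp3), ?_⟩
    simp only [phi42]
    rw [hE, hw, hcol, ← htp1, ← htp2, ← htp3, ← eq_tileFinset hf1, ← eq_tileFinset hf2,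
      ← eq_tileFinset hf4, hCeq]
  · -- T = T₄
    have hcol : i₀ = j := color_unique hk (hT.symm.trans hf4)
    obtain ⟨g, hg⟩ := exists_slot (mem_tileVerts_of_mem hT m4)
    have hw : (fun s => f₀ s (g s)) = Function.update e q b := funext hg
    have hE : Function.update (fun s => f₀ s (g s)) q (e q) = e := by
      rw [hw, Function.update_idem, Function.update_eq_self]
    have hgq : f₀ q (g q) = b := by
      rw [hg q, Function.update_self]
    obtain ⟨tp1, htp1⟩ := exists_recon' (mem_tileVerts_of_mem hf1 m1)
    obtain ⟨tp2, htp2⟩ := exists_recon' (mem_tileVerts_of_mem hf2 m2)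
    obtain ⟨tp3, htp3⟩ := exists_recon' (mem_tileVerts_of_mem hf3 m3)
    right; right; right
    refine ⟨(g, p, q, e q, a, i, tp1, tp2, tp3), ?_⟩
    simp only [phi43]
    rw [hE, hgq, hcol, ← htp1, ← htp2, ← htp3, ← eq_tileFinset hf1, ← eq_tileFinset hf2,
      ← eq_tileFinset hf3, hCeq]

end Cover4
section Count

variable {n k : ℕ}

lemma ncard_le_of_range {α β : Type*} [Fintype β] {S : Set α} {φ : β → α}
    (h : S ⊆ Set.range φ) : S.ncard ≤ Fintype.card β := by
  calc S.ncard ≤ (Set.range φ).ncard := Set.ncard_le_ncard h (Set.finite_range φ)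
    _ = (φ '' Set.univ).ncard := by rw [Set.image_univ]
    _ ≤ (Set.univ : Set β).ncard := Set.ncard_image_le Set.finite_univ
    _ = Fintype.card β := by rw [Set.ncard_univ, Nat.card_eq_fintype_card]

lemma card_A3P_le (hn : 1 ≤ n) :
    Fintype.card (A3P n k) ≤ (k + 1) ^ (4 * k + 1) * k ^ 2 * n ^ (2 * k ^ 2 + 2) := by
  have h1 : (n + 1) / 2 ≤ n := by omega
  calc Fintype.card (A3P n k)
      = ((k + 1) ^ (4 * k + 1) * k ^ 2) * (n * ((n + 1) / 2) * (n ^ (k * k) * n ^ (k * k))) := by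
        simp only [A3P, TPK, ColK, Fintype.card_prod, Fintype.card_fun, Fintype.card_fin,
          ← pow_mul]
        ring
    _ ≤ ((k + 1) ^ (4 * k + 1) * k ^ 2) * (n * n * (n ^ (k * k) * n ^ (k * k))) := by
        gcongr
    _ = (k + 1) ^ (4 * k + 1) * k ^ 2 * n ^ (2 * k ^ 2 + 2) := by ring

lemma card_A4P_le (hn : 1 ≤ n) :
    Fintype.card (A4P n k) ≤ (k + 1) ^ (4 * k) * k ^ 2 * n ^ (3 * k ^ 2 + 3) := by
  have h1 : (n + 1) / 2 ≤ n := by omega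
  calc Fintype.card (A4P n k)
      = ((k + 1) ^ (4 * k) * k ^ 2) *
          (n * n * ((n + 1) / 2) * (n ^ (k * k) * n ^ (k * k) * n ^ (k * k))) := by
        simp only [A4P, TPK, ColK, Fintype.card_prod, Fintype.card_fun, Fintype.card_fin,
          ← pow_mul]
        ring
    _ ≤ ((k + 1) ^ (4 * k) * k ^ 2) *
          (n * n * n * (n ^ (k * k) * n ^ (k * k) * n ^ (k * k))) := by
        gcongr
    _ = (k + 1) ^ (4 * k) * k ^ 2 * n ^ (3 * k ^ 2 + 3) := by ring

end Count

/-- In the auxiliary hypergraph `H₁` built from `K^{(k)}_{n,…,n}` (with `k ≥ 2`), with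
`d = n^{k²+1}/2` there is a constant `c` depending only on `k` such that every tile of
`H₁` lies in at most `c·d²` conflicts of `𝒞` of size 3 and in at most `c·d³` conflicts of
`𝒞` of size 4; that is, `Δ(𝒞^{(3)}) = O(d²)` and `Δ(𝒞^{(4)}) = O(d³)`. -/
theorem stmt18 (k : ℕ) (hk : 2 ≤ k) :
    ∃ c : ℝ, 0 < c ∧ ∀ n : ℕ, 1 ≤ n → ∀ T : Finset (VHK n k), IsTileK n k T →
      ({C : Finset (Finset (VHK n k)) |
          IsConflictK n k C ∧ C.card = 3 ∧ T ∈ C}.ncard : ℝ) ≤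
        c * ((n : ℝ) ^ (k ^ 2 + 1) / 2) ^ 2 ∧
      ({C : Finset (Finset (VHK n k)) |
          IsConflictK n k C ∧ C.card = 4 ∧ T ∈ C}.ncard : ℝ) ≤
        c * ((n : ℝ) ^ (k ^ 2 + 1) / 2) ^ 3 := by
  set C3 : ℕ := 3 * ((k + 1) ^ (4 * k + 1) * k ^ 2) with hC3
  set C4 : ℕ := 4 * ((k + 1) ^ (4 * k) * k ^ 2) with hC4
  refine ⟨((4 * C3 + 8 * C4 + 1 : ℕ) : ℝ), by positivity, ?_⟩
  intro n hn T hTile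
  obtain ⟨i₀, f₀, hinj, hT⟩ := hTile
  constructor
  · -- size-3 bound
    have hsub : {C : Finset (Finset (VHK n k)) |
        IsConflictK n k C ∧ C.card = 3 ∧ T ∈ C} ⊆
        Set.range (phi30 n k T i₀ f₀) ∪ Set.range (phi31 n k T i₀ f₀) ∪
          Set.range (phi32 n k T i₀ f₀) := by
      rintro C ⟨hc, h3, htc⟩
      rcases cover3 hk hT hc h3 htc with ⟨P, hP⟩ | ⟨P, hP⟩ | ⟨P, hP⟩
      exacts [Or.inl (Or.inl ⟨P, hP⟩), Or.inl (Or.inr ⟨P, hP⟩), Or.inr ⟨P, hP⟩]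
    have hcard : {C : Finset (Finset (VHK n k)) |
        IsConflictK n k C ∧ C.card = 3 ∧ T ∈ C}.ncard ≤ 3 * Fintype.card (A3P n k) := by
      calc {C : Finset (Finset (VHK n k)) |
            IsConflictK n k C ∧ C.card = 3 ∧ T ∈ C}.ncard
          ≤ (Set.range (phi30 n k T i₀ f₀) ∪ Set.range (phi31 n k T i₀ f₀) ∪
              Set.range (phi32 n k T i₀ f₀)).ncard :=
            Set.ncard_le_ncard hsub (((Set.finite_range _).union
              (Set.finite_range _)).union (Set.finite_range _))
        _ ≤ (Set.range (phi30 n k T i₀ f₀) ∪ Set.range (phi31 n k T i₀ f₀)).ncard +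
              (Set.range (phi32 n k T i₀ f₀)).ncard := Set.ncard_union_le _ _
        _ ≤ (Set.range (phi30 n k T i₀ f₀)).ncard +
              (Set.range (phi31 n k T i₀ f₀)).ncard +
              (Set.range (phi32 n k T i₀ f₀)).ncard := by
            have := Set.ncard_union_le (Set.range (phi30 n k T i₀ f₀))
              (Set.range (phi31 n k T i₀ f₀))
            omega
        _ ≤ Fintype.card (A3P n k) + Fintype.card (A3P n k) + Fintype.card (A3P n k) := by
            have h0 := ncard_le_of_range (subset_refl (Set.range (phi30 n k T i₀ f₀)))
            have h1 := ncard_le_of_range (subset_refl (Set.range (phi31 n k T i₀ f₀)))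
            have h2 := ncard_le_of_range (subset_refl (Set.range (phi32 n k T i₀ f₀)))
            omega
        _ = 3 * Fintype.card (A3P n k) := by ring
    have hnat : {C : Finset (Finset (VHK n k)) |
        IsConflictK n k C ∧ C.card = 3 ∧ T ∈ C}.ncard ≤ C3 * n ^ (2 * k ^ 2 + 2) := by
      calc _ ≤ 3 * Fintype.card (A3P n k) := hcard
        _ ≤ 3 * ((k + 1) ^ (4 * k + 1) * k ^ 2 * n ^ (2 * k ^ 2 + 2)) :=
            Nat.mul_le_mul_left _ (card_A3P_le hn)
        _ = C3 * n ^ (2 * k ^ 2 + 2) := by rw [hC3]; ring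
    have hX : (0 : ℝ) ≤ (n : ℝ) ^ (2 * k ^ 2 + 2) := by positivity
    calc ({C : Finset (Finset (VHK n k)) |
          IsConflictK n k C ∧ C.card = 3 ∧ T ∈ C}.ncard : ℝ)
        ≤ ((C3 * n ^ (2 * k ^ 2 + 2) : ℕ) : ℝ) := Nat.cast_le.mpr hnat
      _ = (C3 : ℝ) * (n : ℝ) ^ (2 * k ^ 2 + 2) := by push_cast; ring
      _ ≤ ((4 * C3 + 8 * C4 + 1 : ℕ) : ℝ) * ((n : ℝ) ^ (k ^ 2 + 1) / 2) ^ 2 := by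
          have hpow : ((n : ℝ) ^ (k ^ 2 + 1) / 2) ^ 2 = (n : ℝ) ^ (2 * k ^ 2 + 2) / 4 := by
            rw [div_pow, ← pow_mul]
            norm_num
            ring_nf
          rw [hpow]
          have hc : (C3 : ℝ) * 4 ≤ ((4 * C3 + 8 * C4 + 1 : ℕ) : ℝ) := by
            push_cast
            nlinarith [Nat.cast_nonneg (α := ℝ) C4]
          nlinarith
  · -- size-4 bound
    have hsub : {C : Finset (Finset (VHK n k)) |
        IsConflictK n k C ∧ C.card = 4 ∧ T ∈ C} ⊆
        Set.range (phi40 n k T i₀ f₀) ∪ Set.range (phi41 n k T i₀ f₀) ∪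
          Set.range (phi42 n k T i₀ f₀) ∪ Set.range (phi43 n k T i₀ f₀) := by
      rintro C ⟨hc, h4, htc⟩
      rcases cover4 hk hT hc htc with ⟨P, hP⟩ | ⟨P, hP⟩ | ⟨P, hP⟩ | ⟨P, hP⟩
      exacts [Or.inl (Or.inl (Or.inl ⟨P, hP⟩)), Or.inl (Or.inl (Or.inr ⟨P, hP⟩)),
        Or.inl (Or.inr ⟨P, hP⟩), Or.inr ⟨P, hP⟩]
    have hcard : {C : Finset (Finset (VHK n k)) |
        IsConflictK n k C ∧ C.card = 4 ∧ T ∈ C}.ncard ≤ 4 * Fintype.card (A4P n k) := by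
      calc {C : Finset (Finset (VHK n k)) |
            IsConflictK n k C ∧ C.card = 4 ∧ T ∈ C}.ncard
          ≤ (Set.range (phi40 n k T i₀ f₀) ∪ Set.range (phi41 n k T i₀ f₀) ∪
              Set.range (phi42 n k T i₀ f₀) ∪ Set.range (phi43 n k T i₀ f₀)).ncard :=
            Set.ncard_le_ncard hsub ((((Set.finite_range _).union
              (Set.finite_range _)).union (Set.finite_range _)).union (Set.finite_range _))
        _ ≤ (Set.range (phi40 n k T i₀ f₀)).ncard +
              (Set.range (phi41 n k T i₀ f₀)).ncard +
              (Set.range (phi42 n k T i₀ f₀)).ncard +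
              (Set.range (phi43 n k T i₀ f₀)).ncard := by
            have ha := Set.ncard_union_le (Set.range (phi40 n k T i₀ f₀) ∪
              Set.range (phi41 n k T i₀ f₀) ∪ Set.range (phi42 n k T i₀ f₀))
              (Set.range (phi43 n k T i₀ f₀))
            have hb := Set.ncard_union_le (Set.range (phi40 n k T i₀ f₀) ∪
              Set.range (phi41 n k T i₀ f₀)) (Set.range (phi42 n k T i₀ f₀))
            have hc := Set.ncard_union_le (Set.range (phi40 n k T i₀ f₀))
              (Set.range (phi41 n k T i₀ f₀))
            omega
        _ ≤ Fintype.card (A4P n k) + Fintype.card (A4P n k) + Fintype.card (A4P n k) +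
              Fintype.card (A4P n k) := by
            have h0 := ncard_le_of_range (subset_refl (Set.range (phi40 n k T i₀ f₀)))
            have h1 := ncard_le_of_range (subset_refl (Set.range (phi41 n k T i₀ f₀)))
            have h2 := ncard_le_of_range (subset_refl (Set.range (phi42 n k T i₀ f₀)))
            have h3 := ncard_le_of_range (subset_refl (Set.range (phi43 n k T i₀ f₀)))
            omega
        _ = 4 * Fintype.card (A4P n k) := by ring
    have hnat : {C : Finset (Finset (VHK n k)) |
        IsConflictK n k C ∧ C.card = 4 ∧ T ∈ C}.ncard ≤ C4 * n ^ (3 * k ^ 2 + 3) := by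
      calc _ ≤ 4 * Fintype.card (A4P n k) := hcard
        _ ≤ 4 * ((k + 1) ^ (4 * k) * k ^ 2 * n ^ (3 * k ^ 2 + 3)) :=
            Nat.mul_le_mul_left _ (card_A4P_le hn)
        _ = C4 * n ^ (3 * k ^ 2 + 3) := by rw [hC4]; ring
    have hX : (0 : ℝ) ≤ (n : ℝ) ^ (3 * k ^ 2 + 3) := by positivity
    calc ({C : Finset (Finset (VHK n k)) |
          IsConflictK n k C ∧ C.card = 4 ∧ T ∈ C}.ncard : ℝ)
        ≤ ((C4 * n ^ (3 * k ^ 2 + 3) : ℕ) : ℝ) := Nat.cast_le.mpr hnat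
      _ = (C4 : ℝ) * (n : ℝ) ^ (3 * k ^ 2 + 3) := by push_cast; ring
      _ ≤ ((4 * C3 + 8 * C4 + 1 : ℕ) : ℝ) * ((n : ℝ) ^ (k ^ 2 + 1) / 2) ^ 3 := by
          have hpow : ((n : ℝ) ^ (k ^ 2 + 1) / 2) ^ 3 = (n : ℝ) ^ (3 * k ^ 2 + 3) / 8 := by
            rw [div_pow, ← pow_mul]
            norm_num
            ring_nf
          rw [hpow]
          have hc : (C4 : ℝ) * 8 ≤ ((4 * C3 + 8 * C4 + 1 : ℕ) : ℝ) := by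
            push_cast
            nlinarith [Nat.cast_nonneg (α := ℝ) C3]
          nlinarith
end
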